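/- arXiv:1611.09925 — 8 statements merged into one kernel-verified Lean document; each statement's English description precedes it below -/
import Mathlib

section
/- Under the IV assumptions and positivity, the observed mean difference across instrument arms decomposes as E[Y | Z=1] − E[Y | Z=0] = Σ_{u∈𝒰} μ(U=u) · E[Y1 − Y0 | U=u] · ( E[D | Z=1, U=u] − E[D | Z=0, U=u] ). -/
open MeasureTheory ProbabilityTheory

/-- Conditional mean of `W` given event `A`: `E[W | A] = (∫_A W dμ) / μ(A)`. -/
noncomputable def condMean {Ω : Type*} [MeasurableSpace Ω] (μ : Measure Ω)
    (W : Ω → ℝ) (A : Set Ω) : ℝ :=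
  (∫ ω in A, W ω ∂μ) / (μ A).toReal

/-! Within a stratum `U = u`, independence of `Y_d` from `(Z, D)` factorises
`μ(U=u) · ∫_{Z=z, U=u} Y` as `∫_{U=u} Y1 · ∫_{Z=z, U=u} D + ∫_{U=u} Y0 · ∫_{Z=z, U=u} (1 - D)`.
Dividing by `μ(Z=z)` and using `μ(Z=z, U=u) = μ(Z=z) μ(U=u)` turns the contribution of the
stratum to `E[Y | Z=z]` into `∫_{U=u} (Y1 - Y0) · E[D | Z=z, U=u] + ∫_{U=u} Y0`; the `Y0` terms
cancel in the difference of the two instrument arms. -/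

section

variable {Ω : Type*} [MeasurableSpace Ω] {μ : Measure Ω}

lemma abs_one_sub_le_two {x : ℝ} (hx : |x| ≤ 1) : |1 - x| ≤ 2 :=
  (abs_sub _ _).trans (by rw [abs_one]; linarith)

lemma integral_cond_eq_inv_mul_setIntegral (s : Set Ω) (f : Ω → ℝ) :
    ∫ ω, f ω ∂μ[|s] = (μ.real s)⁻¹ * ∫ ω in s, f ω ∂μ := by
  rw [ProbabilityTheory.cond, integral_smul_measure, ENNReal.toReal_inv, smul_eq_mul,
    measureReal_def]

lemma ProbabilityTheory.IndepFun.measureReal_mul_setIntegral_mul [IsFiniteMeasure μ]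
    {s : Set Ω} {f h : Ω → ℝ}
    (hfh : IndepFun f h μ[|s]) (hf : AEStronglyMeasurable f μ) (hh : AEStronglyMeasurable h μ) :
    μ.real s * ∫ ω in s, f ω * h ω ∂μ = (∫ ω in s, f ω ∂μ) * ∫ ω in s, h ω ∂μ := by
  by_cases hs : μ.real s = 0
  · rw [hs, zero_mul, Measure.restrict_eq_zero.mpr ((measureReal_eq_zero_iff).mp hs)]
    simp
  have key := hfh.integral_fun_mul_eq_mul_integral (hf.mono_ac cond_absolutelyContinuous)
    (hh.mono_ac cond_absolutelyContinuous)
  simp only [integral_cond_eq_inv_mul_setIntegral] at key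
  field_simp at key
  linear_combination key

lemma setIntegral_eq_sum_inter_fiber {𝒰 : Type*} [Fintype 𝒰] [MeasurableSpace 𝒰]
    [MeasurableSingletonClass 𝒰] {U : Ω → 𝒰} (hU : Measurable U) {A : Set Ω}
    (hA : MeasurableSet A) {f : Ω → ℝ} (hf : IntegrableOn f A μ) :
    ∫ ω in A, f ω ∂μ = ∑ u, ∫ ω in A ∩ {ω | U ω = u}, f ω ∂μ := by
  have hcover : A = ⋃ u, A ∩ {ω | U ω = u} := by ext ω; simp
  conv_lhs => rw [hcover]
  exact integral_iUnion_fintype (fun u => hA.inter (hU (measurableSet_singleton u)))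
    (fun u v huv => ((pairwise_disjoint_fiber U huv).mono inf_le_right inf_le_right))
    (fun u => hf.mono_set Set.inter_subset_left)

lemma measureReal_mul_setIntegral_inter_eq [IsFiniteMeasure μ] {Z D Y1 Y0 : Ω → ℝ}
    {s : Set Ω} (hZ : Measurable Z) (hD : Measurable D) (hD_bdd : ∀ ω, |D ω| ≤ 1)
    (hY1 : Integrable Y1 μ) (hY0 : Integrable Y0 μ)
    (h1 : IndepFun Y1 (fun ω => (Z ω, D ω)) μ[|s])
    (h0 : IndepFun Y0 (fun ω => (Z ω, D ω)) μ[|s]) (z : ℝ) :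
    μ.real s * ∫ ω in {ω | Z ω = z} ∩ s, D ω * Y1 ω + (1 - D ω) * Y0 ω ∂μ
      = (∫ ω in s, Y1 ω ∂μ) * (∫ ω in {ω | Z ω = z} ∩ s, D ω ∂μ)
        + (∫ ω in s, Y0 ω ∂μ)
          * (μ.real ({ω | Z ω = z} ∩ s) - ∫ ω in {ω | Z ω = z} ∩ s, D ω ∂μ) := by
  set A := {ω | Z ω = z}
  have hA : MeasurableSet A := hZ (measurableSet_singleton z)
  have hzA : MeasurableSet {p : ℝ × ℝ | p.1 = z} := measurable_fst (measurableSet_singleton z)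
  have setIntegral_inter (F : Ω → ℝ) :
      ∫ ω in A ∩ s, F ω ∂μ = ∫ ω in s, A.indicator F ω ∂μ := by
    rw [setIntegral_indicator hA, Set.inter_comm]
  -- both treatment arms, restricted to `A`, are functions of `(Z, D)`
  have i1 : IndepFun Y1 (A.indicator D) μ[|s] :=
    h1.comp measurable_id (measurable_snd.indicator hzA)
  have i0 : IndepFun Y0 (A.indicator (1 - D)) μ[|s] :=
    h0.comp measurable_id ((measurable_const.sub measurable_snd).indicator hzA)
  have hD1 : ∀ ω, ‖A.indicator D ω‖ ≤ 1 := fun ω =>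
    (norm_indicator_le_norm_self D ω).trans (hD_bdd ω)
  have hD0 : ∀ ω, ‖A.indicator (1 - D) ω‖ ≤ 2 := fun ω =>
    (norm_indicator_le_norm_self _ ω).trans (abs_one_sub_le_two (hD_bdd ω))
  have hm1 : AEStronglyMeasurable (A.indicator D) μ := (hD.indicator hA).aestronglyMeasurable
  have hm0 : AEStronglyMeasurable (A.indicator (1 - D)) μ :=
    ((measurable_const.sub hD).indicator hA).aestronglyMeasurable
  have hsplit : ∫ ω in A ∩ s, D ω * Y1 ω + (1 - D ω) * Y0 ω ∂μ
      = ∫ ω in s, Y1 ω * A.indicator D ω ∂μ + ∫ ω in s, Y0 ω * A.indicator (1 - D) ω ∂μ := by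
    rw [setIntegral_inter, ← integral_add]
    · congr 1 with ω
      by_cases hω : ω ∈ A <;> simp [hω, mul_comm]
    · exact (hY1.mul_bdd hm1 (.of_forall hD1)).integrableOn
    · exact (hY0.mul_bdd hm0 (.of_forall hD0)).integrableOn
  have hDs : IntegrableOn D (A ∩ s) μ :=
    (Integrable.of_bound hD.aestronglyMeasurable 1 (.of_forall hD_bdd)).integrableOn
  rw [hsplit, mul_add, i1.measureReal_mul_setIntegral_mul hY1.aestronglyMeasurable hm1,
    i0.measureReal_mul_setIntegral_mul hY0.aestronglyMeasurable hm0, ← setIntegral_inter,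
    ← setIntegral_inter]
  simp only [Pi.sub_apply, Pi.one_apply]
  rw [integral_sub (integrable_const 1) hDs, setIntegral_const, smul_eq_mul, mul_one]

lemma setIntegral_inter_div_eq_mul_condMean_add [IsFiniteMeasure μ] {Z D Y1 Y0 : Ω → ℝ}
    {s : Set Ω} (hZ : Measurable Z) (hD : Measurable D) (hD_bdd : ∀ ω, |D ω| ≤ 1)
    (hY1 : Integrable Y1 μ) (hY0 : Integrable Y0 μ)
    (h1 : IndepFun Y1 (fun ω => (Z ω, D ω)) μ[|s])
    (h0 : IndepFun Y0 (fun ω => (Z ω, D ω)) μ[|s]) {z : ℝ}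
    (hZs : μ ({ω | Z ω = z} ∩ s) = μ {ω | Z ω = z} * μ s) (hz : μ {ω | Z ω = z} ≠ 0)
    (hs : μ s ≠ 0) :
    (∫ ω in {ω | Z ω = z} ∩ s, D ω * Y1 ω + (1 - D ω) * Y0 ω ∂μ) / μ.real {ω | Z ω = z}
      = (∫ ω in s, Y1 ω - Y0 ω ∂μ) * condMean μ D ({ω | Z ω = z} ∩ s)
        + ∫ ω in s, Y0 ω ∂μ := by
  have key := measureReal_mul_setIntegral_inter_eq hZ hD hD_bdd hY1 hY0 h1 h0 z
  have hZs' : μ.real ({ω | Z ω = z} ∩ s) = μ.real {ω | Z ω = z} * μ.real s := by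
    simp only [measureReal_def, hZs, ENNReal.toReal_mul]
  have hz' : μ.real {ω | Z ω = z} ≠ 0 := (measureReal_ne_zero_iff (measure_ne_top _ _)).mpr hz
  have hs' : μ.real s ≠ 0 := (measureReal_ne_zero_iff (measure_ne_top _ _)).mpr hs
  rw [integral_sub hY1.integrableOn hY0.integrableOn, condMean, ← measureReal_def, hZs']
  rw [hZs'] at key
  field_simp
  linear_combination key

lemma toReal_mul_condMean [IsFiniteMeasure μ] {A : Set Ω} (hA : μ A ≠ 0) (W : Ω → ℝ) :
    (μ A).toReal * condMean μ W A = ∫ ω in A, W ω ∂μ :=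
  mul_div_cancel₀ _ (ENNReal.toReal_ne_zero.mpr ⟨hA, measure_ne_top _ _⟩)

lemma integrable_mul_add_one_sub_mul {D Y1 Y0 : Ω → ℝ} (hD : Measurable D)
    (hD_bdd : ∀ ω, |D ω| ≤ 1) (hY1 : Integrable Y1 μ) (hY0 : Integrable Y0 μ) :
    Integrable (fun ω => D ω * Y1 ω + (1 - D ω) * Y0 ω) μ := by
  refine (hY1.bdd_mul hD.aestronglyMeasurable (.of_forall hD_bdd)).add
    (hY0.bdd_mul (measurable_const.sub hD).aestronglyMeasurable
      (.of_forall fun ω => abs_one_sub_le_two (hD_bdd ω)))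

end

theorem observed_mean_difference_decomposition_general
    {Ω : Type*} [MeasurableSpace Ω] (μ : Measure Ω) [IsProbabilityMeasure μ]
    {𝒰 : Type*} [Fintype 𝒰] [MeasurableSpace 𝒰] [MeasurableSingletonClass 𝒰]
    (Z D Y1 Y0 Y : Ω → ℝ) (U : Ω → 𝒰)
    (hZmeas : Measurable Z) (hDmeas : Measurable D) (hUmeas : Measurable U)
    (hD01 : ∀ ω, D ω = 0 ∨ D ω = 1)
    (hY1int : Integrable Y1 μ) (hY0int : Integrable Y0 μ)
    (hYdef : ∀ ω, Y ω = D ω * Y1 ω + (1 - D ω) * Y0 ω)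
    (hUpos : ∀ u : 𝒰, 0 < μ {ω | U ω = u})
    -- (A2) Z is independent of U
    (hA2 : ∀ (z : ℝ) (u : 𝒰),
      μ ({ω | Z ω = z} ∩ {ω | U ω = u}) = μ {ω | Z ω = z} * μ {ω | U ω = u})
    -- (A1′, A4) under μ(· | U = u), each potential outcome is independent of (Z, D)
    (hA14one : ∀ u : 𝒰, IndepFun Y1 (fun ω => (Z ω, D ω)) (μ[|{ω | U ω = u}]))
    (hA14zero : ∀ u : 𝒰, IndepFun Y0 (fun ω => (Z ω, D ω)) (μ[|{ω | U ω = u}]))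
    -- positivity
    (hPos : ∀ (z : ℝ), (z = 0 ∨ z = 1) → ∀ (u : 𝒰),
      0 < μ ({ω | Z ω = z} ∩ {ω | U ω = u})) :
    condMean μ Y {ω | Z ω = 1} - condMean μ Y {ω | Z ω = 0}
      = ∑ u : 𝒰, (μ {ω | U ω = u}).toReal
          * condMean μ (fun ω => Y1 ω - Y0 ω) {ω | U ω = u}
          * (condMean μ D ({ω | Z ω = 1} ∩ {ω | U ω = u})
             - condMean μ D ({ω | Z ω = 0} ∩ {ω | U ω = u})) := by
  have hY : Y = fun ω => D ω * Y1 ω + (1 - D ω) * Y0 ω := funext hYdef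
  have hD_bdd (ω : Ω) : |D ω| ≤ 1 := by rcases hD01 ω with h | h <;> simp [h]
  have hYint : Integrable Y μ :=
    hY ▸ integrable_mul_add_one_sub_mul hDmeas hD_bdd hY1int hY0int
  have arm (z : ℝ) (hz : z = 0 ∨ z = 1) : condMean μ Y {ω | Z ω = z}
      = ∑ u, ((∫ ω in {ω | U ω = u}, Y1 ω - Y0 ω ∂μ)
          * condMean μ D ({ω | Z ω = z} ∩ {ω | U ω = u}) + ∫ ω in {ω | U ω = u}, Y0 ω ∂μ) := by
    rw [condMean, setIntegral_eq_sum_inter_fiber (A := {ω | Z ω = z}) hUmeas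
      (hZmeas (measurableSet_singleton z)) hYint.integrableOn, Finset.sum_div]
    refine Finset.sum_congr rfl fun u _ => ?_
    rw [hY]
    exact setIntegral_inter_div_eq_mul_condMean_add hZmeas hDmeas hD_bdd hY1int hY0int
      (hA14one u) (hA14zero u) (hA2 z u)
      ((hPos z hz u).trans_le (measure_mono Set.inter_subset_left)).ne' (hUpos u).ne'
  rw [arm 1 (.inr rfl), arm 0 (.inl rfl), ← Finset.sum_sub_distrib]
  refine Finset.sum_congr rfl fun u _ => ?_
  rw [← toReal_mul_condMean (hUpos u).ne' (fun ω => Y1 ω - Y0 ω)]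
  ring

/-- Under the IV assumptions and positivity,
`E[Y | Z=1] − E[Y | Z=0]
  = Σ_{u} μ(U=u) · E[Y1 − Y0 | U=u] · (E[D | Z=1, U=u] − E[D | Z=0, U=u])`. -/
theorem observed_mean_difference_decomposition
    {Ω : Type*} [MeasurableSpace Ω] (μ : Measure Ω) [IsProbabilityMeasure μ]
    {𝒰 : Type*} [Fintype 𝒰] [MeasurableSpace 𝒰] [MeasurableSingletonClass 𝒰]
    (Z D Y1 Y0 Y : Ω → ℝ) (U : Ω → 𝒰)
    (hZmeas : Measurable Z) (hDmeas : Measurable D) (hUmeas : Measurable U)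
    (hZ01 : ∀ ω, Z ω = 0 ∨ Z ω = 1) (hD01 : ∀ ω, D ω = 0 ∨ D ω = 1)
    (hY1int : Integrable Y1 μ) (hY0int : Integrable Y0 μ)
    (hYdef : ∀ ω, Y ω = D ω * Y1 ω + (1 - D ω) * Y0 ω)
    (hUpos : ∀ u : 𝒰, 0 < μ {ω | U ω = u})
    -- (A2) Z is independent of U
    (hA2 : ∀ (z : ℝ) (u : 𝒰),
      μ ({ω | Z ω = z} ∩ {ω | U ω = u}) = μ {ω | Z ω = z} * μ {ω | U ω = u})
    -- (A1′, A4) under μ(· | U = u), each potential outcome is independent of (Z, D)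
    (hA14one : ∀ u : 𝒰, IndepFun Y1 (fun ω => (Z ω, D ω)) (μ[|{ω | U ω = u}]))
    (hA14zero : ∀ u : 𝒰, IndepFun Y0 (fun ω => (Z ω, D ω)) (μ[|{ω | U ω = u}]))
    -- positivity
    (hPos : ∀ (z : ℝ), (z = 0 ∨ z = 1) → ∀ (u : 𝒰),
      0 < μ ({ω | Z ω = z} ∩ {ω | U ω = u})) :
    condMean μ Y {ω | Z ω = 1} - condMean μ Y {ω | Z ω = 0}
      = ∑ u : 𝒰, (μ {ω | U ω = u}).toReal
          * condMean μ (fun ω => Y1 ω - Y0 ω) {ω | U ω = u}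
          * (condMean μ D ({ω | Z ω = 1} ∩ {ω | U ω = u})
             - condMean μ D ({ω | Z ω = 0} ∩ {ω | U ω = u})) :=
  observed_mean_difference_decomposition_general μ Z D Y1 Y0 Y U hZmeas hDmeas hUmeas hD01 hY1int
    hY0int hYdef hUpos hA2 hA14one hA14zero hPos
end

section
/- Suppose the IV assumptions and positivity hold, δ^D ≠ 0, and there is no additive U–d interaction in the outcome model, i.e. for every u ∈ 𝒰, E[Y1 − Y0 | U=u] = E[Y1 − Y0]. Then the Wald estimand identifies the average treatment effect: δ^Y / δ^D = E[Y1 − Y0]. -/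
open MeasureTheory ProbabilityTheory

/-! Within a stratum `U = u`, independence of each `Y_d` from `(Z, D)` factorises
`E[Y; Z = z | U = u] = P(Z = z | U = u) E[Y0 | U = u] + E[D; Z = z | U = u] E[Y1 - Y0 | U = u]`,
and the last factor is the ATE `τ` by the no-interaction assumption. Averaging over `u`, where
`Z ⊥ U` makes `P(Z = z | U = u) = P(Z = z)`, gives `E[Y | Z = z] = E[Y0] + τ E[D | Z = z]`;
differencing over `z = 1, 0` cancels `E[Y0]`, so `δ^Y = τ δ^D`. -/

section

variable {Ω : Type*} [MeasurableSpace Ω]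

lemma MeasureTheory.Integrable.cond {μ : Measure Ω} {f : Ω → ℝ} (hf : Integrable f μ)
    (s : Set Ω) : Integrable f μ[|s] := by
  obtain hs | hs := eq_or_ne (μ s) 0
  · rw [cond_eq_zero_of_meas_eq_zero hs]
    exact integrable_zero_measure
  · exact hf.restrict.smul_measure (ENNReal.inv_ne_top.2 hs)

lemma condMean_eq_integral_cond (μ : Measure Ω) (W : Ω → ℝ) (s : Set Ω) :
    condMean μ W s = ∫ ω, W ω ∂μ[|s] := by
  rw [condMean, ProbabilityTheory.cond, integral_smul_measure, ENNReal.toReal_inv, smul_eq_mul,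
    div_eq_inv_mul]

lemma measureReal_mul_setIntegral_cond {μ : Measure Ω} [IsFiniteMeasure μ] {s : Set Ω}
    (hs : MeasurableSet s) (f : Ω → ℝ) (A : Set Ω) :
    μ.real s * ∫ ω in A, f ω ∂μ[|s] = ∫ ω in s ∩ A, f ω ∂μ := by
  obtain hs0 | hs0 := eq_or_ne (μ s) 0
  · rw [measureReal_def, hs0, ENNReal.toReal_zero, zero_mul,
      setIntegral_measure_zero _ (measure_inter_null_of_null_left A hs0)]
  · rw [ProbabilityTheory.cond, Measure.restrict_smul, Measure.restrict_restrict' hs,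
      integral_smul_measure, smul_eq_mul, ← mul_assoc, ENNReal.toReal_inv, ← measureReal_def,
      mul_inv_cancel₀ ((measureReal_ne_zero_iff (measure_ne_top μ s)).2 hs0), one_mul,
      Set.inter_comm]

lemma setIntegral_eq_sum_measureReal_mul_setIntegral_cond {ι : Type*} [Fintype ι]
    [MeasurableSpace ι] [MeasurableSingletonClass ι] {μ : Measure Ω} [IsFiniteMeasure μ]
    {U : Ω → ι} (hU : Measurable U) {f : Ω → ℝ} (hf : Integrable f μ) (A : Set Ω) :
    ∫ ω in A, f ω ∂μ = ∑ u, μ.real (U ⁻¹' {u}) * ∫ ω in A, f ω ∂μ[|U ⁻¹' {u}] := by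
  have hfibers : ∀ u, MeasurableSet (U ⁻¹' {u}) := fun u => hU (measurableSet_singleton u)
  calc ∫ ω in A, f ω ∂μ = ∫ ω in ⋃ u, U ⁻¹' {u}, f ω ∂(μ.restrict A) := by
        rw [← Set.preimage_iUnion, Set.iUnion_of_singleton, Set.preimage_univ,
          Measure.restrict_univ]
    _ = ∑ u, ∫ ω in U ⁻¹' {u}, f ω ∂(μ.restrict A) :=
        integral_iUnion_fintype hfibers
          (fun u v huv => (Set.disjoint_singleton.2 huv).preimage U)
          (fun u => hf.restrict.integrableOn)
    _ = ∑ u, μ.real (U ⁻¹' {u}) * ∫ ω in A, f ω ∂μ[|U ⁻¹' {u}] := by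
        simp only [Measure.restrict_restrict (hfibers _),
          measureReal_mul_setIntegral_cond (hfibers _)]

lemma ProbabilityTheory.IndepFun.setIntegral_preimage_comp_mul {β : Type*} [MeasurableSpace β]
    {ν : Measure Ω} {X : Ω → ℝ} {W : Ω → β} (hXW : IndepFun X W ν) (hX : AEMeasurable X ν)
    (hW : Measurable W) {h : β → ℝ} (hh : Measurable h) {S : Set β} (hS : MeasurableSet S) :
    ∫ ω in W ⁻¹' S, h (W ω) * X ω ∂ν = (∫ ω in W ⁻¹' S, h (W ω) ∂ν) * ∫ ω, X ω ∂ν := by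
  have hindicator : ∀ g : Ω → ℝ,
      ∫ ω in W ⁻¹' S, h (W ω) * g ω ∂ν = ∫ ω, S.indicator h (W ω) * g ω ∂ν := fun g => by
    rw [← integral_indicator (hW hS)]
    congr with ω
    by_cases hω : W ω ∈ S <;> simp [Set.indicator, hω]
  have hmul := hXW.symm.integral_fun_comp_mul_comp hW.aemeasurable hX
    (hh.indicator hS).aestronglyMeasurable measurable_id.aestronglyMeasurable (f := S.indicator h)
  have hconst := hindicator fun _ => 1
  simp only [mul_one] at hconst
  rw [hindicator, hconst]
  exact hmul

def observedOutcome (D Y1 Y0 : Ω → ℝ) : Ω → ℝ := fun ω => D ω * Y1 ω + (1 - D ω) * Y0 ω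

lemma setIntegral_observedOutcome_of_indepFun {α : Type*} [MeasurableSpace α] {ν : Measure Ω}
    {Z : Ω → α} {D Y1 Y0 : Ω → ℝ} (hZ : Measurable Z) (hD : Measurable D)
    (hDint : Integrable D ν) (hY1 : Integrable Y1 ν) (hY0 : Integrable Y0 ν)
    (h1 : IndepFun Y1 (fun ω => (Z ω, D ω)) ν) (h0 : IndepFun Y0 (fun ω => (Z ω, D ω)) ν)
    {S : Set α} (hS : MeasurableSet S) :
    ∫ ω in Z ⁻¹' S, observedOutcome D Y1 Y0 ω ∂ν
      = ν.real (Z ⁻¹' S) * ∫ ω, Y0 ω ∂ν + (∫ ω in Z ⁻¹' S, D ω ∂ν) * ∫ ω, (Y1 ω - Y0 ω) ∂ν := by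
  have hpreimage : Z ⁻¹' S = (fun ω => (Z ω, D ω)) ⁻¹' (S ×ˢ Set.univ) := by ext; simp
  have hfactor : ∀ {X : Ω → ℝ}, IndepFun X (fun ω => (Z ω, D ω)) ν → Integrable X ν →
      ∀ {h : α × ℝ → ℝ}, Measurable h → ∫ ω in Z ⁻¹' S, h (Z ω, D ω) * X ω ∂ν
        = (∫ ω in Z ⁻¹' S, h (Z ω, D ω) ∂ν) * ∫ ω, X ω ∂ν := fun hXW hX _ hh => by
    rw [hpreimage]
    exact hXW.setIntegral_preimage_comp_mul hX.aemeasurable (hZ.prodMk hD) hh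
      (hS.prod MeasurableSet.univ)
  have hsetY0 : ∫ ω in Z ⁻¹' S, Y0 ω ∂ν = ν.real (Z ⁻¹' S) * ∫ ω, Y0 ω ∂ν := by
    simpa using hfactor h0 hY0 (h := fun _ => 1) measurable_const
  have hDY1 : ∫ ω in Z ⁻¹' S, D ω * Y1 ω ∂ν = (∫ ω in Z ⁻¹' S, D ω ∂ν) * ∫ ω, Y1 ω ∂ν :=
    hfactor h1 hY1 measurable_snd
  have hDY0 : ∫ ω in Z ⁻¹' S, D ω * Y0 ω ∂ν = (∫ ω in Z ⁻¹' S, D ω ∂ν) * ∫ ω, Y0 ω ∂ν :=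
    hfactor h0 hY0 measurable_snd
  have hDY1int : Integrable (fun ω => D ω * Y1 ω) ν :=
    (h1.comp measurable_id measurable_snd).symm.integrable_mul hDint hY1
  have hDY0int : Integrable (fun ω => D ω * Y0 ω) ν :=
    (h0.comp measurable_id measurable_snd).symm.integrable_mul hDint hY0
  have hsplit : ∀ ω, observedOutcome D Y1 Y0 ω = Y0 ω + (D ω * Y1 ω - D ω * Y0 ω) := by
    intro ω
    simp only [observedOutcome]
    ring
  simp only [hsplit]
  rw [integral_add hY0.integrableOn (g := fun ω => D ω * Y1 ω - D ω * Y0 ω)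
      (hDY1int.sub hDY0int).integrableOn,
    integral_sub hDY1int.integrableOn hDY0int.integrableOn, hsetY0, hDY1, hDY0,
    integral_sub hY1 hY0]
  ring

lemma setIntegral_observedOutcome_eq {ι α : Type*} [Fintype ι] [MeasurableSpace ι]
    [MeasurableSingletonClass ι] [MeasurableSpace α] {μ : Measure Ω} [IsFiniteMeasure μ]
    {Z : Ω → α} {D Y1 Y0 : Ω → ℝ} {U : Ω → ι} (hZ : Measurable Z) (hD : Measurable D)
    (hU : Measurable U) (hD01 : ∀ ω, D ω = 0 ∨ D ω = 1)
    (hY1 : Integrable Y1 μ) (hY0 : Integrable Y0 μ)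
    (h1 : ∀ u, IndepFun Y1 (fun ω => (Z ω, D ω)) μ[|U ⁻¹' {u}])
    (h0 : ∀ u, IndepFun Y0 (fun ω => (Z ω, D ω)) μ[|U ⁻¹' {u}])
    {τ : ℝ} (hτ : ∀ u, ∫ ω, (Y1 ω - Y0 ω) ∂μ[|U ⁻¹' {u}] = τ)
    {S : Set α} (hS : MeasurableSet S)
    (hZU : ∀ u, μ (Z ⁻¹' S ∩ U ⁻¹' {u}) = μ (Z ⁻¹' S) * μ (U ⁻¹' {u})) :
    ∫ ω in Z ⁻¹' S, observedOutcome D Y1 Y0 ω ∂μ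
      = μ.real (Z ⁻¹' S) * ∫ ω, Y0 ω ∂μ + (∫ ω in Z ⁻¹' S, D ω ∂μ) * τ := by
  have hDbound : ∀ ω, ‖D ω‖ ≤ 1 := fun ω => by rcases hD01 ω with h | h <;> simp [h]
  have hDbound' : ∀ ω, ‖1 - D ω‖ ≤ 1 := fun ω => by rcases hD01 ω with h | h <;> simp [h]
  have hDint : Integrable D μ := .of_bound hD.aestronglyMeasurable 1 (ae_of_all _ hDbound)
  have hYint : Integrable (observedOutcome D Y1 Y0) μ :=
    (hY1.bdd_mul hD.aestronglyMeasurable (ae_of_all _ hDbound)).add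
      (hY0.bdd_mul (measurable_const.sub hD).aestronglyMeasurable (ae_of_all _ hDbound'))
  have hweight : ∀ u, μ.real (U ⁻¹' {u}) * (μ[|U ⁻¹' {u}]).real (Z ⁻¹' S)
      = μ.real (Z ⁻¹' S) * μ.real (U ⁻¹' {u}) := fun u => by
    simp only [measureReal_def]
    rw [← ENNReal.toReal_mul, mul_comm, cond_mul_eq_inter (hU (measurableSet_singleton u)),
      Set.inter_comm, hZU u, ENNReal.toReal_mul]
  rw [setIntegral_eq_sum_measureReal_mul_setIntegral_cond hU hYint,
    setIntegral_eq_sum_measureReal_mul_setIntegral_cond hU hDint, ← setIntegral_univ,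
    setIntegral_eq_sum_measureReal_mul_setIntegral_cond hU hY0, Finset.mul_sum, Finset.sum_mul,
    ← Finset.sum_add_distrib]
  refine Finset.sum_congr rfl fun u _ => ?_
  rw [setIntegral_observedOutcome_of_indepFun hZ hD (hDint.cond _) (hY1.cond _) (hY0.cond _)
    (h1 u) (h0 u) hS, hτ u, setIntegral_univ]
  linear_combination (∫ ω, Y0 ω ∂μ[|U ⁻¹' {u}]) * hweight u

lemma condMean_eq_add_mul_condMean_of_setIntegral_eq {μ : Measure Ω} [IsFiniteMeasure μ]
    {W D : Ω → ℝ} {A : Set Ω} {c τ : ℝ}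
    (h : ∫ ω in A, W ω ∂μ = μ.real A * c + (∫ ω in A, D ω ∂μ) * τ) (hA : μ A ≠ 0) :
    condMean μ W A = c + τ * condMean μ D A := by
  have hA' : μ.real A ≠ 0 := (measureReal_ne_zero_iff (measure_ne_top μ A)).2 hA
  rw [condMean, condMean, h, ← measureReal_def]
  field_simp

end

theorem wald_identifies_ate_no_Ud_interaction_general
    {Ω : Type*} [MeasurableSpace Ω] (μ : Measure Ω) [IsProbabilityMeasure μ]
    {𝒰 : Type*} [Fintype 𝒰] [MeasurableSpace 𝒰] [MeasurableSingletonClass 𝒰]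
    (Z D Y1 Y0 Y : Ω → ℝ) (U : Ω → 𝒰)
    (hZmeas : Measurable Z) (hDmeas : Measurable D) (hUmeas : Measurable U)
    (hD01 : ∀ ω, D ω = 0 ∨ D ω = 1)
    (hY1int : Integrable Y1 μ) (hY0int : Integrable Y0 μ)
    (hYdef : ∀ ω, Y ω = D ω * Y1 ω + (1 - D ω) * Y0 ω)
    -- (A2) Z is independent of U
    (hA2 : ∀ (z : ℝ) (u : 𝒰),
      μ ({ω | Z ω = z} ∩ {ω | U ω = u}) = μ {ω | Z ω = z} * μ {ω | U ω = u})
    -- (A1′, A4) under μ(· | U = u), each potential outcome is independent of (Z, D)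
    (hA14one : ∀ u : 𝒰, IndepFun Y1 (fun ω => (Z ω, D ω)) (μ[|{ω | U ω = u}]))
    (hA14zero : ∀ u : 𝒰, IndepFun Y0 (fun ω => (Z ω, D ω)) (μ[|{ω | U ω = u}]))
    -- positivity
    (hPos : ∀ (z : ℝ), (z = 0 ∨ z = 1) → ∀ (u : 𝒰),
      0 < μ ({ω | Z ω = z} ∩ {ω | U ω = u}))
    -- δ^Y and δ^D
    (δY δD : ℝ)
    (hδY : δY = condMean μ Y {ω | Z ω = 1} - condMean μ Y {ω | Z ω = 0})
    (hδD : δD = condMean μ D {ω | Z ω = 1} - condMean μ D {ω | Z ω = 0})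
    (hδDne : δD ≠ 0)
    -- (A5.b) no additive U–d interaction in the outcome model
    (hA5b : ∀ u : 𝒰,
      condMean μ (fun ω => Y1 ω - Y0 ω) {ω | U ω = u}
        = ∫ ω, (Y1 ω - Y0 ω) ∂μ) :
    δY / δD = ∫ ω, (Y1 ω - Y0 ω) ∂μ := by
  set τ := ∫ ω, (Y1 ω - Y0 ω) ∂μ
  have hY : Y = observedOutcome D Y1 Y0 := funext hYdef
  have hτ : ∀ u, ∫ ω, (Y1 ω - Y0 ω) ∂μ[|U ⁻¹' {u}] = τ := fun u =>
    (condMean_eq_integral_cond μ _ _).symm.trans (hA5b u)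
  have hZpos : ∀ z : ℝ, z = 0 ∨ z = 1 → μ {ω | Z ω = z} ≠ 0 := fun z hz hnull => by
    have := nonempty_of_isProbabilityMeasure μ
    exact (hPos z hz (U (Classical.arbitrary Ω))).ne'
      (measure_mono_null Set.inter_subset_left hnull)
  have hcondMean : ∀ z : ℝ, z = 0 ∨ z = 1 →
      condMean μ Y {ω | Z ω = z} = ∫ ω, Y0 ω ∂μ + τ * condMean μ D {ω | Z ω = z} :=
    fun z hz => hY ▸ condMean_eq_add_mul_condMean_of_setIntegral_eq
      (setIntegral_observedOutcome_eq hZmeas hDmeas hUmeas hD01 hY1int hY0int hA14one hA14zero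
        hτ (measurableSet_singleton z) (hA2 z)) (hZpos z hz)
  have hδ : δY = τ * δD := by
    rw [hδY, hδD, hcondMean 1 (.inr rfl), hcondMean 0 (.inl rfl)]
    ring
  rw [hδ, mul_div_cancel_right₀ _ hδDne]

/-- under the IV assumptions, positivity, `δ^D ≠ 0` and no additive
`U`–`d` interaction in the outcome model (A5.b), the Wald estimand `δ^Y / δ^D`
identifies the average treatment effect `E[Y1 − Y0]`. -/
theorem wald_identifies_ate_no_Ud_interaction
    {Ω : Type*} [MeasurableSpace Ω] (μ : Measure Ω) [IsProbabilityMeasure μ]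
    {𝒰 : Type*} [Fintype 𝒰] [MeasurableSpace 𝒰] [MeasurableSingletonClass 𝒰]
    (Z D Y1 Y0 Y : Ω → ℝ) (U : Ω → 𝒰)
    (hZmeas : Measurable Z) (hDmeas : Measurable D) (hUmeas : Measurable U)
    (hZ01 : ∀ ω, Z ω = 0 ∨ Z ω = 1) (hD01 : ∀ ω, D ω = 0 ∨ D ω = 1)
    (hY1int : Integrable Y1 μ) (hY0int : Integrable Y0 μ)
    (hYdef : ∀ ω, Y ω = D ω * Y1 ω + (1 - D ω) * Y0 ω)
    (hUpos : ∀ u : 𝒰, 0 < μ {ω | U ω = u})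
    -- (A2) Z is independent of U
    (hA2 : ∀ (z : ℝ) (u : 𝒰),
      μ ({ω | Z ω = z} ∩ {ω | U ω = u}) = μ {ω | Z ω = z} * μ {ω | U ω = u})
    -- (A1′, A4) under μ(· | U = u), each potential outcome is independent of (Z, D)
    (hA14one : ∀ u : 𝒰, IndepFun Y1 (fun ω => (Z ω, D ω)) (μ[|{ω | U ω = u}]))
    (hA14zero : ∀ u : 𝒰, IndepFun Y0 (fun ω => (Z ω, D ω)) (μ[|{ω | U ω = u}]))
    -- positivity
    (hPos : ∀ (z : ℝ), (z = 0 ∨ z = 1) → ∀ (u : 𝒰),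
      0 < μ ({ω | Z ω = z} ∩ {ω | U ω = u}))
    -- δ^Y and δ^D
    (δY δD : ℝ)
    (hδY : δY = condMean μ Y {ω | Z ω = 1} - condMean μ Y {ω | Z ω = 0})
    (hδD : δD = condMean μ D {ω | Z ω = 1} - condMean μ D {ω | Z ω = 0})
    (hδDne : δD ≠ 0)
    -- (A5.b) no additive U–d interaction in the outcome model
    (hA5b : ∀ u : 𝒰,
      condMean μ (fun ω => Y1 ω - Y0 ω) {ω | U ω = u}
        = ∫ ω, (Y1 ω - Y0 ω) ∂μ) :
    δY / δD = ∫ ω, (Y1 ω - Y0 ω) ∂μ :=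
  wald_identifies_ate_no_Ud_interaction_general μ Z D Y1 Y0 Y U hZmeas hDmeas hUmeas hD01 hY1int
    hY0int hYdef hA2 hA14one hA14zero hPos δY δD hδY hδD hδDne hA5b
end

section
/- Suppose δ^D(x) ≠ 0 for every x ∈ 𝒳. Then the inverse probability weighting identity holds: E[ Y · (2Z − 1) / ( δ^D(X) · f(Z | X) ) ] = Σ_{x∈𝒳} μ(X=x) · δ(x) = Δ, the average Wald estimand. -/
/-!
Partition `Ω` into the cells `{Z = z, X = x}`. On each cell the IPW integrand is the constant
`(2z - 1) / (δ^D(x) f(z | x))` times `Y`, so its integral over the cell is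
`± μ(X = x) · p_z^Y(x) / δ^D(x)`; summing the two cells with the same `x` gives
`μ(X = x) δ(x)`.
-/

open MeasureTheory

section FiberIntegral

variable {Ω β : Type*} [MeasurableSpace Ω] {μ : Measure Ω}
  [MeasurableSpace β] [MeasurableSingletonClass β]

theorem integral_comp_mul_eq_sum_fiber {V : Ω → β} (hV : Measurable V) {S : Finset β}
    (hS : ∀ ω, V ω ∈ S) {Y : Ω → ℝ} (hY : Integrable Y μ) (c : β → ℝ) :
    ∫ ω, c (V ω) * Y ω ∂μ = ∑ b ∈ S, c b * ∫ ω in V ⁻¹' {b}, Y ω ∂μ := by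
  have hfiber : ∀ b, MeasurableSet (V ⁻¹' {b}) := fun b => hV (measurableSet_singleton b)
  have hEqOn : ∀ b, Set.EqOn (fun ω => c (V ω) * Y ω) (fun ω => c b * Y ω) (V ⁻¹' {b}) :=
    fun b ω (hω : V ω = b) => by simp only [hω]
  have hcover : (⋃ b ∈ S, V ⁻¹' {b}) = Set.univ :=
    Set.eq_univ_of_forall fun ω => Set.mem_biUnion (hS ω) rfl
  rw [← setIntegral_univ, ← hcover,
    integral_biUnion_finset S (fun b _ => hfiber b) (Set.pairwiseDisjoint_fiber V S)
    fun b _ => (hY.const_mul (c b)).integrableOn.congr_fun (hEqOn b).symm (hfiber b)]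
  exact Finset.sum_congr rfl fun b _ => by
    rw [setIntegral_congr_fun (hfiber b) (hEqOn b), integral_const_mul]

end FiberIntegral

theorem ipw_average_wald_identity_general
    {Ω : Type*} [MeasurableSpace Ω] (μ : Measure Ω)
    {𝒳 : Type*} [Fintype 𝒳] [MeasurableSpace 𝒳] [MeasurableSingletonClass 𝒳]
    (Z Y : Ω → ℝ) (X : Ω → 𝒳)
    (hZmeas : Measurable Z) (hXmeas : Measurable X)
    (hZ01 : ∀ ω, Z ω = 0 ∨ Z ω = 1)
    (hYint : Integrable Y μ)
    -- f(z | x) = μ(Z = z | X = x)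
    (f : ℝ → 𝒳 → ℝ)
    (hf : ∀ (z : ℝ) (x : 𝒳),
      f z x = (μ ({ω | Z ω = z} ∩ {ω | X ω = x})).toReal / (μ {ω | X ω = x}).toReal)
    -- p_z^Y, p_z^D, δ^Y, δ^D, and the conditional Wald estimand δ
    (pY : ℝ → 𝒳 → ℝ)
    (hpY : ∀ (z : ℝ) (x : 𝒳),
      pY z x = condMean μ Y ({ω | Z ω = z} ∩ {ω | X ω = x}))
    (δY δD δ : 𝒳 → ℝ)
    (hδY : ∀ x, δY x = pY 1 x - pY 0 x)
    (hδ : ∀ x, δ x = δY x / δD x)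
    -- the average Wald estimand
    (Δ : ℝ) (hΔ : Δ = ∑ x : 𝒳, (μ {ω | X ω = x}).toReal * δ x) :
    (∫ ω, Y ω * (2 * Z ω - 1) / (δD (X ω) * f (Z ω) (X ω)) ∂μ)
        = ∑ x : 𝒳, (μ {ω | X ω = x}).toReal * δ x
      ∧ (∫ ω, Y ω * (2 * Z ω - 1) / (δD (X ω) * f (Z ω) (X ω)) ∂μ) = Δ := by
  set c : ℝ × 𝒳 → ℝ := fun p => (2 * p.1 - 1) / (δD p.2 * f p.1 p.2)
  have hcell : ∀ z x, (fun ω => (Z ω, X ω)) ⁻¹' {(z, x)} = {ω | Z ω = z} ∩ {ω | X ω = x} :=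
    fun z x => by ext; simp
  have hrange : ∀ ω, (Z ω, X ω) ∈ ({0, 1} : Finset ℝ) ×ˢ Finset.univ := fun ω => by
    simpa using hZ01 ω
  have key : (∫ ω, Y ω * (2 * Z ω - 1) / (δD (X ω) * f (Z ω) (X ω)) ∂μ)
      = ∑ x : 𝒳, (μ {ω | X ω = x}).toReal * δ x := by
    calc (∫ ω, Y ω * (2 * Z ω - 1) / (δD (X ω) * f (Z ω) (X ω)) ∂μ)
        = ∫ ω, c (Z ω, X ω) * Y ω ∂μ := integral_congr_ae <| .of_forall fun ω => by
          simp only [c]; ring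
      _ = ∑ p ∈ ({0, 1} : Finset ℝ) ×ˢ Finset.univ,
            c p * ∫ ω in {ω | Z ω = p.1} ∩ {ω | X ω = p.2}, Y ω ∂μ := by
          rw [integral_comp_mul_eq_sum_fiber (hZmeas.prodMk hXmeas) hrange hYint]
          simp only [← hcell]
      _ = ∑ x : 𝒳, (μ {ω | X ω = x}).toReal * δ x := by
          rw [Finset.sum_product, Finset.sum_pair zero_ne_one, ← Finset.sum_add_distrib]
          refine Finset.sum_congr rfl fun x _ => ?_
          simp only [c, hδ, hδY, hpY, hf, condMean, div_eq_mul_inv, mul_inv, inv_inv]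
          ring
  exact ⟨key, key.trans hΔ.symm⟩

/-- if `δ^D(x) ≠ 0` for every `x`, then
`E[ Y (2Z − 1) / (δ^D(X) f(Z | X)) ] = Σ_x μ(X=x) δ(x) = Δ`,
the average Wald estimand. -/
theorem ipw_average_wald_identity
    {Ω : Type*} [MeasurableSpace Ω] (μ : Measure Ω) [IsProbabilityMeasure μ]
    {𝒳 : Type*} [Fintype 𝒳] [MeasurableSpace 𝒳] [MeasurableSingletonClass 𝒳]
    (Z D Y : Ω → ℝ) (X : Ω → 𝒳)
    (hZmeas : Measurable Z) (hDmeas : Measurable D) (hXmeas : Measurable X)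
    (hYmeas : Measurable Y)
    (hZ01 : ∀ ω, Z ω = 0 ∨ Z ω = 1) (hD01 : ∀ ω, D ω = 0 ∨ D ω = 1)
    (hYint : Integrable Y μ)
    -- positivity
    (hPos : ∀ (z : ℝ), (z = 0 ∨ z = 1) → ∀ (x : 𝒳),
      0 < μ ({ω | Z ω = z} ∩ {ω | X ω = x}))
    -- f(z | x) = μ(Z = z | X = x)
    (f : ℝ → 𝒳 → ℝ)
    (hf : ∀ (z : ℝ) (x : 𝒳),
      f z x = (μ ({ω | Z ω = z} ∩ {ω | X ω = x})).toReal / (μ {ω | X ω = x}).toReal)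
    -- p_z^Y, p_z^D, δ^Y, δ^D, and the conditional Wald estimand δ
    (pY pD : ℝ → 𝒳 → ℝ)
    (hpY : ∀ (z : ℝ) (x : 𝒳),
      pY z x = condMean μ Y ({ω | Z ω = z} ∩ {ω | X ω = x}))
    (hpD : ∀ (z : ℝ) (x : 𝒳),
      pD z x = condMean μ D ({ω | Z ω = z} ∩ {ω | X ω = x}))
    (δY δD δ : 𝒳 → ℝ)
    (hδY : ∀ x, δY x = pY 1 x - pY 0 x)
    (hδD : ∀ x, δD x = pD 1 x - pD 0 x)
    (hδDne : ∀ x, δD x ≠ 0)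
    (hδ : ∀ x, δ x = δY x / δD x)
    -- the average Wald estimand
    (Δ : ℝ) (hΔ : Δ = ∑ x : 𝒳, (μ {ω | X ω = x}).toReal * δ x) :
    (∫ ω, Y ω * (2 * Z ω - 1) / (δD (X ω) * f (Z ω) (X ω)) ∂μ)
        = ∑ x : 𝒳, (μ {ω | X ω = x}).toReal * δ x
      ∧ (∫ ω, Y ω * (2 * Z ω - 1) / (δD (X ω) * f (Z ω) (X ω)) ∂μ) = Δ :=
  ipw_average_wald_identity_general μ Z Y X hZmeas hXmeas hZ01 hYint f hf pY hpY δY δD δ hδY hδ Δ hΔ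
end

section
/- Suppose δ^D(x) ≠ 0 for every x ∈ 𝒳. Then the g-estimating function evaluated at the true conditional Wald estimand has conditional mean zero: for every x ∈ 𝒳, E[ ( Y − D · δ(X) ) · (2Z − 1) / f(Z | X) | X = x ] = 0. -/
/-!
Split `{X = x}` along the two values of `Z`. On `{Z = z, X = x}` the integrand is
`±(Y - D δ(x)) / f(z | x)`, and since `f(z | x) = μ(Z = z, X = x) / μ(X = x)` its integral there is
`±(p_z^Y(x) - p_z^D(x) δ(x)) μ(X = x)`. The two pieces add up to `(δ^Y(x) - δ(x) δ^D(x)) μ(X = x)`,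
which vanishes because `δ(x)` is the Wald ratio.
-/

open MeasureTheory Set

section

variable {Ω : Type*} [MeasurableSpace Ω] {μ : Measure Ω} {A : Set Ω}

theorem condMean_sub_mul_const {V W : Ω → ℝ} (hV : IntegrableOn V A μ) (hW : IntegrableOn W A μ)
    (c : ℝ) :
    condMean μ (fun ω => V ω - W ω * c) A = condMean μ V A - condMean μ W A * c := by
  rw [condMean, integral_sub hV (hW.mul_const c), integral_mul_const, condMean, condMean]
  ring

theorem setIntegral_div_measureReal_div {W : Ω → ℝ} (hA : (μ A).toReal ≠ 0) (s : ℝ) :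
    ∫ ω in A, W ω / ((μ A).toReal / s) ∂μ = condMean μ W A * s := by
  rw [integral_div, condMean]
  field_simp

theorem setIntegral_eq_add_of_forall_eq_zero_or_eq_one {Z g : Ω → ℝ} {S : Set Ω}
    (hZ : Measurable Z) (hZ01 : ∀ ω, Z ω = 0 ∨ Z ω = 1) (hS : MeasurableSet S)
    (h0 : IntegrableOn g ({ω | Z ω = 0} ∩ S) μ) (h1 : IntegrableOn g ({ω | Z ω = 1} ∩ S) μ) :
    ∫ ω in S, g ω ∂μ = ∫ ω in {ω | Z ω = 0} ∩ S, g ω ∂μ + ∫ ω in {ω | Z ω = 1} ∩ S, g ω ∂μ := by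
  have hsplit : S = ({ω | Z ω = 0} ∩ S) ∪ ({ω | Z ω = 1} ∩ S) := by
    rw [← union_inter_distrib_right, eq_comm, inter_eq_right]
    exact fun ω _ => hZ01 ω
  have hdisj : Disjoint ({ω | Z ω = 0} ∩ S) ({ω | Z ω = 1} ∩ S) :=
    (disjoint_left.mpr fun ω (h0 : Z ω = 0) (h1 : Z ω = 1) => by simp [h0] at h1).mono
      inter_subset_left inter_subset_left
  conv_lhs => rw [hsplit]
  exact setIntegral_union hdisj ((hZ (measurableSet_singleton 1)).inter hS) h0 h1

theorem integrable_of_forall_eq_zero_or_eq_one [IsFiniteMeasure μ] {D : Ω → ℝ} (hD : Measurable D)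
    (hD01 : ∀ ω, D ω = 0 ∨ D ω = 1) : Integrable D μ :=
  .of_bound hD.aestronglyMeasurable 1 <| .of_forall fun ω => by
    rcases hD01 ω with h | h <;> simp [h]

end

theorem g_estimating_function_unbiased_general
    {Ω : Type*} [MeasurableSpace Ω] (μ : Measure Ω) [IsProbabilityMeasure μ]
    {𝒳 : Type*} [MeasurableSpace 𝒳] [MeasurableSingletonClass 𝒳]
    (Z D Y : Ω → ℝ) (X : Ω → 𝒳)
    (hZmeas : Measurable Z) (hDmeas : Measurable D) (hXmeas : Measurable X)
    (hZ01 : ∀ ω, Z ω = 0 ∨ Z ω = 1) (hD01 : ∀ ω, D ω = 0 ∨ D ω = 1)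
    (hYint : Integrable Y μ)
    -- positivity
    (hPos : ∀ (z : ℝ), (z = 0 ∨ z = 1) → ∀ (x : 𝒳),
      0 < μ ({ω | Z ω = z} ∩ {ω | X ω = x}))
    -- f(z | x) = μ(Z = z | X = x)
    (f : ℝ → 𝒳 → ℝ)
    (hf : ∀ (z : ℝ) (x : 𝒳),
      f z x = (μ ({ω | Z ω = z} ∩ {ω | X ω = x})).toReal / (μ {ω | X ω = x}).toReal)
    -- p_z^Y, p_z^D, δ^Y, δ^D, and the conditional Wald estimand δ
    (pY pD : ℝ → 𝒳 → ℝ)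
    (hpY : ∀ (z : ℝ) (x : 𝒳),
      pY z x = condMean μ Y ({ω | Z ω = z} ∩ {ω | X ω = x}))
    (hpD : ∀ (z : ℝ) (x : 𝒳),
      pD z x = condMean μ D ({ω | Z ω = z} ∩ {ω | X ω = x}))
    (δY δD δ : 𝒳 → ℝ)
    (hδY : ∀ x, δY x = pY 1 x - pY 0 x)
    (hδD : ∀ x, δD x = pD 1 x - pD 0 x)
    (hδDne : ∀ x, δD x ≠ 0)
    (hδ : ∀ x, δ x = δY x / δD x) :
    ∀ x : 𝒳,
      condMean μ (fun ω => (Y ω - D ω * δ (X ω)) * (2 * Z ω - 1) / f (Z ω) (X ω))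
          {ω | X ω = x}
        = 0 := by
  intro x
  set S := {ω | X ω = x}
  set g := fun ω => (Y ω - D ω * δ (X ω)) * (2 * Z ω - 1) / f (Z ω) (X ω)
  have hS : MeasurableSet S := hXmeas (measurableSet_singleton x)
  have hDint : Integrable D μ := integrable_of_forall_eq_zero_or_eq_one hDmeas hD01
  have hpiece : ∀ z : ℝ, (z = 0 ∨ z = 1) → IntegrableOn g ({ω | Z ω = z} ∩ S) μ ∧
      ∫ ω in {ω | Z ω = z} ∩ S, g ω ∂μ =
        (2 * z - 1) * ((pY z x - pD z x * δ x) * (μ S).toReal) := by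
    intro z hz
    have hA : MeasurableSet ({ω | Z ω = z} ∩ S) := (hZmeas (measurableSet_singleton z)).inter hS
    have hmA := (ENNReal.toReal_pos (hPos z hz x).ne' (measure_ne_top _ _)).ne'
    have hg : EqOn g (fun ω => (2 * z - 1) * ((Y ω - D ω * δ x) / f z x)) ({ω | Z ω = z} ∩ S) := by
      rintro ω ⟨hzω : Z ω = z, hxω : X ω = x⟩
      simp only [g, hzω, hxω]
      ring
    have hint : Integrable (fun ω => (2 * z - 1) * ((Y ω - D ω * δ x) / f z x)) μ :=
      ((hYint.sub (hDint.mul_const _)).div_const _).const_mul _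
    refine ⟨hint.integrableOn.congr_fun hg.symm hA, ?_⟩
    rw [setIntegral_congr_fun hA hg, integral_const_mul, hf, setIntegral_div_measureReal_div hmA,
      condMean_sub_mul_const hYint.integrableOn hDint.integrableOn, ← hpY, ← hpD]
  obtain ⟨hint0, hI0⟩ := hpiece 0 (.inl rfl)
  obtain ⟨hint1, hI1⟩ := hpiece 1 (.inr rfl)
  have hwald : δ x * δD x = δY x := by rw [hδ, div_mul_cancel₀ _ (hδDne x)]
  rw [condMean, setIntegral_eq_add_of_forall_eq_zero_or_eq_one hZmeas hZ01 hS hint0 hint1, hI0,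
    hI1, div_eq_zero_iff]
  left
  linear_combination (μ S).toReal * (δ x * hδD x - hδY x - hwald)

/-- if `δ^D(x) ≠ 0` for every `x`, then the g-estimating function at
the true conditional Wald estimand has conditional mean zero:
`E[ (Y − D δ(X)) (2Z − 1) / f(Z | X) | X = x ] = 0` for every `x`. -/
theorem g_estimating_function_unbiased
    {Ω : Type*} [MeasurableSpace Ω] (μ : Measure Ω) [IsProbabilityMeasure μ]
    {𝒳 : Type*} [Fintype 𝒳] [MeasurableSpace 𝒳] [MeasurableSingletonClass 𝒳]
    (Z D Y : Ω → ℝ) (X : Ω → 𝒳)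
    (hZmeas : Measurable Z) (hDmeas : Measurable D) (hXmeas : Measurable X)
    (hZ01 : ∀ ω, Z ω = 0 ∨ Z ω = 1) (hD01 : ∀ ω, D ω = 0 ∨ D ω = 1)
    (hYint : Integrable Y μ)
    -- positivity
    (hPos : ∀ (z : ℝ), (z = 0 ∨ z = 1) → ∀ (x : 𝒳),
      0 < μ ({ω | Z ω = z} ∩ {ω | X ω = x}))
    -- f(z | x) = μ(Z = z | X = x)
    (f : ℝ → 𝒳 → ℝ)
    (hf : ∀ (z : ℝ) (x : 𝒳),
      f z x = (μ ({ω | Z ω = z} ∩ {ω | X ω = x})).toReal / (μ {ω | X ω = x}).toReal)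
    -- p_z^Y, p_z^D, δ^Y, δ^D, and the conditional Wald estimand δ
    (pY pD : ℝ → 𝒳 → ℝ)
    (hpY : ∀ (z : ℝ) (x : 𝒳),
      pY z x = condMean μ Y ({ω | Z ω = z} ∩ {ω | X ω = x}))
    (hpD : ∀ (z : ℝ) (x : 𝒳),
      pD z x = condMean μ D ({ω | Z ω = z} ∩ {ω | X ω = x}))
    (δY δD δ : 𝒳 → ℝ)
    (hδY : ∀ x, δY x = pY 1 x - pY 0 x)
    (hδD : ∀ x, δD x = pD 1 x - pD 0 x)
    (hδDne : ∀ x, δD x ≠ 0)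
    (hδ : ∀ x, δ x = δY x / δD x) :
    ∀ x : 𝒳,
      condMean μ (fun ω => (Y ω - D ω * δ (X ω)) * (2 * Z ω - 1) / f (Z ω) (X ω))
          {ω | X ω = x}
        = 0 :=
  g_estimating_function_unbiased_general μ Z D Y X hZmeas hDmeas hXmeas hZ01 hD01 hYint hPos f hf pY
    pD hpY hpD δY δD δ hδY hδD hδDne hδ
end

section
/- (Robustness in model M1.) Suppose δ^D(x) ≠ 0 for every x ∈ 𝒳, and let f* : {0,1} × 𝒳 → ℝ be an arbitrary function with f*(z,x) ≠ 0 for all z, x (a possibly misspecified instrument density). Then Φ(f*, δ, δ^D, p_0^Y, p_0^D) = Δ, where the remaining nuisance functions are the true ones. -/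
/-!
Split `Ω` into the cells `{Z = z, X = x}`. On a cell the integrand of `Φ` is an affine function
of `(Y, D)` with constant coefficients, so its integral over the cell is that affine function
evaluated at the cell means `(p_z^Y(x), p_z^D(x))`, times the mass of the cell. At these means
the correction term vanishes whatever the weight `(2z - 1) / (f*(z, x) δ^D(x))` is: for `z = 0`
trivially, and for `z = 1` because `p_1^Y - p_0^Y = δ (p_1^D - p_0^D)` is the definition of the
Wald estimand. Hence each cell contributes `δ(x) μ(Z = z, X = x)`, and summing over `z` gives `Δ`.
-/

open MeasureTheory

/-- The multiply robust functional
`Φ(f*, δ*, δD*, pY*, pD*) = E[ ((2Z−1)/f*(Z,X)) (1/δD*(X))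
  (Y − pY*(X) − D δ*(X) + pD*(X) δ*(X)) + δ*(X) ]`. -/
noncomputable def mrFunctional {Ω 𝒳 : Type*} [MeasurableSpace Ω] (μ : Measure Ω)
    (Z D Y : Ω → ℝ) (X : Ω → 𝒳)
    (fs : ℝ → 𝒳 → ℝ) (δs δDs pYs pDs : 𝒳 → ℝ) : ℝ :=
  ∫ ω, ((2 * Z ω - 1) / fs (Z ω) (X ω)) * (1 / δDs (X ω)) *
      (Y ω - pYs (X ω) - D ω * δs (X ω) + pDs (X ω) * δs (X ω)) + δs (X ω) ∂μ

theorem eqOn_preimage_singleton_comp {Ω β γ : Type*} (V : Ω → β) (v : β) (h : β → Ω → γ) :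
    Set.EqOn (fun ω => h (V ω) ω) (h v) (V ⁻¹' {v}) :=
  fun ω hω => congrArg (h · ω) hω

section Fibers

variable {Ω β E : Type*} [MeasurableSpace Ω] [MeasurableSpace β] [MeasurableSingletonClass β]
  [NormedAddCommGroup E] [NormedSpace ℝ E] {μ : Measure Ω} {V : Ω → β} {s : Finset β}

theorem integral_eq_sum_setIntegral_preimage_singleton (hV : Measurable V) (hVs : ∀ ω, V ω ∈ s)
    {F : Ω → E} (hF : ∀ v ∈ s, IntegrableOn F (V ⁻¹' {v}) μ) :
    ∫ ω, F ω ∂μ = ∑ v ∈ s, ∫ ω in V ⁻¹' {v}, F ω ∂μ := by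
  rw [← integral_biUnion_finset s (fun v _ => hV (measurableSet_singleton v))
      (Set.pairwiseDisjoint_fiber V s) hF, Finset.set_biUnion_preimage_singleton,
    Set.eq_univ_of_forall (s := V ⁻¹' s) hVs, Measure.restrict_univ]

theorem integral_comp_eq_sum_measureReal_preimage [CompleteSpace E] [IsFiniteMeasure μ]
    (hV : Measurable V) (hVs : ∀ ω, V ω ∈ s) (h : β → E) :
    ∫ ω, h (V ω) ∂μ = ∑ v ∈ s, μ.real (V ⁻¹' {v}) • h v := by
  have hfiber (v : β) : Set.EqOn (fun ω => h (V ω)) (fun _ => h v) (V ⁻¹' {v}) :=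
    eqOn_preimage_singleton_comp V v fun v _ => h v
  rw [integral_eq_sum_setIntegral_preimage_singleton hV hVs fun v _ =>
    (integrableOn_const (C := h v)).congr_fun (hfiber v).symm (hV (measurableSet_singleton v))]
  refine Finset.sum_congr rfl fun v _ => ?_
  rw [setIntegral_congr_fun (hV (measurableSet_singleton v)) (hfiber v), setIntegral_const]

end Fibers

section CondMean

variable {Ω : Type*} [MeasurableSpace Ω] {μ : Measure Ω} [IsFiniteMeasure μ]

theorem setIntegral_eq_condMean_mul (W : Ω → ℝ) (A : Set Ω) :
    ∫ ω in A, W ω ∂μ = condMean μ W A * μ.real A := by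
  rcases eq_or_ne (μ A) 0 with hA | hA
  · simp [Measure.restrict_eq_zero.mpr hA, measureReal_def, hA]
  · rw [condMean, measureReal_def,
      div_mul_cancel₀ _ (ENNReal.toReal_ne_zero.mpr ⟨hA, measure_ne_top μ A⟩)]

variable {Y D : Ω → ℝ} {g : ℝ → ℝ → ℝ} {α β γ : ℝ}

theorem integrable_affine_comp (hY : Integrable Y μ) (hD : Integrable D μ)
    (hg : ∀ y d, g y d = α * y + β * d + γ) : Integrable (fun ω => g (Y ω) (D ω)) μ := by
  simp only [hg]
  exact ((hY.const_mul α).add (hD.const_mul β)).add (integrable_const γ)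

theorem setIntegral_affine_comp (hY : Integrable Y μ) (hD : Integrable D μ)
    (hg : ∀ y d, g y d = α * y + β * d + γ) (A : Set Ω) :
    ∫ ω in A, g (Y ω) (D ω) ∂μ = g (condMean μ Y A) (condMean μ D A) * μ.real A := by
  simp only [hg]
  have hYD : Integrable (fun ω => α * Y ω + β * D ω) μ := (hY.const_mul α).add (hD.const_mul β)
  rw [integral_add hYD.integrableOn (integrable_const γ).integrableOn,
    integral_add (hY.const_mul α).integrableOn (hD.const_mul β).integrableOn,
    integral_const_mul, integral_const_mul, setIntegral_const, smul_eq_mul,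
    setIntegral_eq_condMean_mul Y, setIntegral_eq_condMean_mul D]
  ring

end CondMean

section Integrand

variable {𝒳 : Type*} (fs : ℝ → 𝒳 → ℝ) (δs δDs pYs pDs : 𝒳 → ℝ)

noncomputable def mrWeight (z : ℝ) (x : 𝒳) : ℝ :=
  (2 * z - 1) / fs z x * (1 / δDs x)

noncomputable def mrIntegrand (z : ℝ) (x : 𝒳) (y d : ℝ) : ℝ :=
  mrWeight fs δDs z x * (y - pYs x - d * δs x + pDs x * δs x) + δs x

theorem mrFunctional_eq_integral_mrIntegrand {Ω : Type*} [MeasurableSpace Ω] (μ : Measure Ω)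
    (Z D Y : Ω → ℝ) (X : Ω → 𝒳) :
    mrFunctional μ Z D Y X fs δs δDs pYs pDs =
      ∫ ω, mrIntegrand fs δs δDs pYs pDs (Z ω) (X ω) (Y ω) (D ω) ∂μ :=
  rfl

theorem mrIntegrand_eq_affine (z : ℝ) (x : 𝒳) (y d : ℝ) :
    mrIntegrand fs δs δDs pYs pDs z x y d =
      mrWeight fs δDs z x * y + -(mrWeight fs δDs z x * δs x) * d +
        (mrWeight fs δDs z x * (pDs x * δs x - pYs x) + δs x) := by
  unfold mrIntegrand
  ring

variable {Ω : Type*} [MeasurableSpace Ω] {μ : Measure Ω} [IsFiniteMeasure μ]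
  {Y D : Ω → ℝ} {V : Ω → ℝ × 𝒳} {v : ℝ × 𝒳}

theorem integrableOn_mrIntegrand_fiber (hY : Integrable Y μ) (hD : Integrable D μ)
    (hv : MeasurableSet (V ⁻¹' {v})) :
    IntegrableOn (fun ω => mrIntegrand fs δs δDs pYs pDs (V ω).1 (V ω).2 (Y ω) (D ω))
      (V ⁻¹' {v}) μ :=
  (integrable_affine_comp hY hD
      (mrIntegrand_eq_affine fs δs δDs pYs pDs v.1 v.2)).integrableOn.congr_fun
    (eqOn_preimage_singleton_comp V v fun v ω =>
      mrIntegrand fs δs δDs pYs pDs v.1 v.2 (Y ω) (D ω)).symm hv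

theorem setIntegral_mrIntegrand_fiber (hY : Integrable Y μ) (hD : Integrable D μ)
    (hv : MeasurableSet (V ⁻¹' {v})) :
    ∫ ω in V ⁻¹' {v}, mrIntegrand fs δs δDs pYs pDs (V ω).1 (V ω).2 (Y ω) (D ω) ∂μ =
      mrIntegrand fs δs δDs pYs pDs v.1 v.2 (condMean μ Y (V ⁻¹' {v}))
        (condMean μ D (V ⁻¹' {v})) * μ.real (V ⁻¹' {v}) := by
  rw [setIntegral_congr_fun hv (eqOn_preimage_singleton_comp V v fun v ω =>
      mrIntegrand fs δs δDs pYs pDs v.1 v.2 (Y ω) (D ω))]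
  exact setIntegral_affine_comp hY hD (mrIntegrand_eq_affine fs δs δDs pYs pDs v.1 v.2) _

end Integrand

theorem mrIntegrand_pY_pD_eq_of_wald {𝒳 : Type*} (fs : ℝ → 𝒳 → ℝ) (δs δDs : 𝒳 → ℝ)
    {pY pD : ℝ → 𝒳 → ℝ} {x : 𝒳} (hwald : pY 1 x - pY 0 x = δs x * (pD 1 x - pD 0 x))
    {z : ℝ} (hz : z = 0 ∨ z = 1) :
    mrIntegrand fs δs δDs (pY 0) (pD 0) z x (pY z x) (pD z x) = δs x := by
  unfold mrIntegrand
  rcases hz with rfl | rfl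
  · ring
  · linear_combination mrWeight fs δDs 1 x * hwald

theorem mr_robust_M1_general
    {Ω : Type*} [MeasurableSpace Ω] (μ : Measure Ω) [IsProbabilityMeasure μ]
    {𝒳 : Type*} [Fintype 𝒳] [MeasurableSpace 𝒳] [MeasurableSingletonClass 𝒳]
    (Z D Y : Ω → ℝ) (X : Ω → 𝒳)
    (hZmeas : Measurable Z) (hDmeas : Measurable D) (hXmeas : Measurable X)
    (hZ01 : ∀ ω, Z ω = 0 ∨ Z ω = 1) (hD01 : ∀ ω, D ω = 0 ∨ D ω = 1)
    (hYint : Integrable Y μ)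
    -- p_z^Y, p_z^D, δ^Y, δ^D, and the conditional Wald estimand δ
    (pY pD : ℝ → 𝒳 → ℝ)
    (hpY : ∀ (z : ℝ) (x : 𝒳),
      pY z x = condMean μ Y ({ω | Z ω = z} ∩ {ω | X ω = x}))
    (hpD : ∀ (z : ℝ) (x : 𝒳),
      pD z x = condMean μ D ({ω | Z ω = z} ∩ {ω | X ω = x}))
    (δY δD δ : 𝒳 → ℝ)
    (hδY : ∀ x, δY x = pY 1 x - pY 0 x)
    (hδD : ∀ x, δD x = pD 1 x - pD 0 x)
    (hδDne : ∀ x, δD x ≠ 0)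
    (hδ : ∀ x, δ x = δY x / δD x)
    -- the average Wald estimand
    (Δ : ℝ) (hΔ : Δ = ∑ x : 𝒳, (μ {ω | X ω = x}).toReal * δ x)
    -- an arbitrary nonvanishing candidate instrument density
    (fs : ℝ → 𝒳 → ℝ) :
    mrFunctional μ Z D Y X fs δ δD (fun x => pY 0 x) (fun x => pD 0 x) = Δ := by
  have hDint : Integrable D μ :=
    (integrable_const (1 : ℝ)).mono' hDmeas.aestronglyMeasurable
      (.of_forall fun ω => by rcases hD01 ω with h | h <;> simp [h])
  have hwald (x : 𝒳) : pY 1 x - pY 0 x = δ x * (pD 1 x - pD 0 x) := by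
    rw [← hδD, ← hδY, hδ, div_mul_cancel₀ _ (hδDne x)]
  set V : Ω → ℝ × 𝒳 := fun ω => (Z ω, X ω)
  set cells : Finset (ℝ × 𝒳) := {0, 1} ×ˢ Finset.univ
  have hV : Measurable V := hZmeas.prodMk hXmeas
  have hVcells (ω : Ω) : V ω ∈ cells := by simpa [V, cells] using hZ01 ω
  have hcell (v : ℝ × 𝒳) : MeasurableSet (V ⁻¹' {v}) := hV (measurableSet_singleton v)
  calc mrFunctional μ Z D Y X fs δ δD (fun x => pY 0 x) (fun x => pD 0 x)
      = ∑ v ∈ cells, ∫ ω in V ⁻¹' {v},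
          mrIntegrand fs δ δD (pY 0) (pD 0) (V ω).1 (V ω).2 (Y ω) (D ω) ∂μ :=
        (mrFunctional_eq_integral_mrIntegrand ..).trans <|
          integral_eq_sum_setIntegral_preimage_singleton hV hVcells fun v _ =>
            integrableOn_mrIntegrand_fiber fs δ δD (pY 0) (pD 0) hYint hDint (hcell v)
    _ = ∑ v ∈ cells, μ.real (V ⁻¹' {v}) • δ v.2 := by
        refine Finset.sum_congr rfl fun ⟨z, x⟩ hzx => ?_
        have hz : z = 0 ∨ z = 1 := by simpa using (Finset.mem_product.1 hzx).1
        have hpreim : V ⁻¹' {(z, x)} = {ω | Z ω = z} ∩ {ω | X ω = x} := by ext; simp [V]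
        rw [setIntegral_mrIntegrand_fiber fs δ δD (pY 0) (pD 0) hYint hDint (hcell _), hpreim,
          ← hpY, ← hpD, mrIntegrand_pY_pD_eq_of_wald fs δ δD (hwald x) hz, smul_eq_mul, mul_comm]
    _ = ∫ ω, δ (X ω) ∂μ :=
        (integral_comp_eq_sum_measureReal_preimage hV hVcells fun v => δ v.2).symm
    _ = Δ := by
        rw [integral_comp_eq_sum_measureReal_preimage hXmeas (fun _ => Finset.mem_univ _), hΔ]
        rfl

/-- robustness in model `M1`: with the true nuisance functions
`δ, δ^D, p_0^Y, p_0^D` and an arbitrary nonvanishing (possibly misspecified)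
instrument density `f*`, the multiply robust functional recovers the average Wald
estimand: `Φ(f*, δ, δ^D, p_0^Y, p_0^D) = Δ`. -/
theorem mr_robust_M1
    {Ω : Type*} [MeasurableSpace Ω] (μ : Measure Ω) [IsProbabilityMeasure μ]
    {𝒳 : Type*} [Fintype 𝒳] [MeasurableSpace 𝒳] [MeasurableSingletonClass 𝒳]
    (Z D Y : Ω → ℝ) (X : Ω → 𝒳)
    (hZmeas : Measurable Z) (hDmeas : Measurable D) (hXmeas : Measurable X)
    (hYmeas : Measurable Y)
    (hZ01 : ∀ ω, Z ω = 0 ∨ Z ω = 1) (hD01 : ∀ ω, D ω = 0 ∨ D ω = 1)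
    (hYint : Integrable Y μ)
    -- positivity
    (hPos : ∀ (z : ℝ), (z = 0 ∨ z = 1) → ∀ (x : 𝒳),
      0 < μ ({ω | Z ω = z} ∩ {ω | X ω = x}))
    -- f(z | x) = μ(Z = z | X = x)
    (f : ℝ → 𝒳 → ℝ)
    (hf : ∀ (z : ℝ) (x : 𝒳),
      f z x = (μ ({ω | Z ω = z} ∩ {ω | X ω = x})).toReal / (μ {ω | X ω = x}).toReal)
    -- p_z^Y, p_z^D, δ^Y, δ^D, and the conditional Wald estimand δ
    (pY pD : ℝ → 𝒳 → ℝ)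
    (hpY : ∀ (z : ℝ) (x : 𝒳),
      pY z x = condMean μ Y ({ω | Z ω = z} ∩ {ω | X ω = x}))
    (hpD : ∀ (z : ℝ) (x : 𝒳),
      pD z x = condMean μ D ({ω | Z ω = z} ∩ {ω | X ω = x}))
    (δY δD δ : 𝒳 → ℝ)
    (hδY : ∀ x, δY x = pY 1 x - pY 0 x)
    (hδD : ∀ x, δD x = pD 1 x - pD 0 x)
    (hδDne : ∀ x, δD x ≠ 0)
    (hδ : ∀ x, δ x = δY x / δD x)
    -- the average Wald estimand
    (Δ : ℝ) (hΔ : Δ = ∑ x : 𝒳, (μ {ω | X ω = x}).toReal * δ x)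
    -- an arbitrary nonvanishing candidate instrument density
    (fs : ℝ → 𝒳 → ℝ)
    (hfs : ∀ (z : ℝ), (z = 0 ∨ z = 1) → ∀ (x : 𝒳), fs z x ≠ 0) :
    mrFunctional μ Z D Y X fs δ δD (fun x => pY 0 x) (fun x => pD 0 x) = Δ :=
  mr_robust_M1_general μ Z D Y X hZmeas hDmeas hXmeas hZ01 hD01 hYint pY pD hpY hpD δY δD δ hδY hδD
    hδDne hδ Δ hΔ fs
end

section
/- The map (p0, p1) ↦ ( p1 − p0 , (p0·p1)/((1 − p0)(1 − p1)) ) is a bijection from the open square (0,1) × (0,1) onto (−1,1) × (0,∞); that is, for every δ ∈ (−1,1) and θ ∈ (0,∞) there exists a unique pair (p0, p1) ∈ (0,1)² with p1 − p0 = δ and (p0·p1)/((1 − p0)(1 − p1)) = θ. -/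
open Set

lemma rdop_mono {δ a b : ℝ} (ha0 : 0 < a) (ha2 : 0 < a + δ)
    (hb3 : b < 1) (hb1 : b + δ < 1) (hab : a < b) :
    a*(a+δ)/((1-a)*(1-a-δ)) < b*(b+δ)/((1-b)*(1-b-δ)) := by
  have hb0 : 0 < b := lt_trans ha0 hab
  have hb2 : 0 < b + δ := by linarith
  have ha3 : a < 1 := lt_trans hab hb3
  have ha1 : a + δ < 1 := by linarith
  have hda : 0 < (1-a)*(1-a-δ) := by nlinarith
  have hdb : 0 < (1-b)*(1-b-δ) := by nlinarith
  rw [div_lt_div_iff₀ hda hdb]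
  have hu : a*(a+δ) < b*(b+δ) := by nlinarith
  have hv : (1-b)*(1-b-δ) < (1-a)*(1-a-δ) := by nlinarith
  have hu2 : 0 < b*(b+δ) := mul_pos hb0 hb2
  calc a*(a+δ) * ((1-b)*(1-b-δ)) < b*(b+δ) * ((1-b)*(1-b-δ)) :=
        mul_lt_mul_of_pos_right hu hdb
    _ < b*(b+δ) * ((1-a)*(1-a-δ)) := mul_lt_mul_of_pos_left hv hu2

lemma rdop_exists' {δ θ : ℝ} (hδ : -1 < δ) (hδ' : δ < 1) (hθ : 0 < θ) :
    ∃ x : ℝ, 0 < x ∧ x < 1 ∧ 0 < x + δ ∧ x + δ < 1 ∧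
      x*(x+δ)/((1-x)*(1-x-δ)) = θ := by
  set lo : ℝ := max 0 (-δ) with hlo_def
  set hi : ℝ := min 1 (1-δ) with hhi_def
  have hlo0 : 0 ≤ lo := le_max_left _ _
  have hlod : -δ ≤ lo := le_max_right _ _
  have hhi1 : hi ≤ 1 := min_le_left _ _
  have hhid : hi ≤ 1 - δ := min_le_right _ _
  have hlohi : lo < hi := by
    apply max_lt <;> apply lt_min <;> linarith
  set m : ℝ := (lo + hi)/2 with hm_def
  have hm1 : lo < m := by simp only [hm_def]; linarith
  have hm2 : m < hi := by simp only [hm_def]; linarith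
  have hm0 : 0 < m := lt_of_le_of_lt hlo0 hm1
  have hmδ : 0 < m + δ := by linarith
  have hm3 : m < 1 := lt_of_lt_of_le hm2 hhi1
  have hm4 : m + δ < 1 := by linarith
  set c : ℝ := (1-m)*(1-m-δ) with hc_def
  have hc : 0 < c := mul_pos (by linarith) (by linarith)
  set n : ℝ := m*(m+δ) with hn_def
  have hn : 0 < n := mul_pos hm0 hmδ
  set a : ℝ := lo + min ((hi-lo)/2) (θ*c) with ha_def
  set b : ℝ := hi - min ((hi-lo)/2) (n/θ) with hb_def
  have hminpos1 : 0 < min ((hi-lo)/2) (θ*c) := lt_min (by linarith) (mul_pos hθ hc)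
  have hminpos2 : 0 < min ((hi-lo)/2) (n/θ) := lt_min (by linarith) (div_pos hn hθ)
  have ha_lo : lo < a := by simp only [ha_def]; linarith
  have ha_m : a ≤ m := by
    have := min_le_left ((hi-lo)/2) (θ*c)
    simp only [ha_def, hm_def]; linarith
  have hb_m : m ≤ b := by
    have := min_le_left ((hi-lo)/2) (n/θ)
    simp only [hb_def, hm_def]; linarith
  have hb_hi : b < hi := by simp only [hb_def]; linarith
  have hab : a ≤ b := le_trans ha_m hb_m
  -- bounds for points in [a,b]
  have hbnd : ∀ x ∈ Icc a b, 0 < x ∧ x < 1 ∧ 0 < x + δ ∧ x + δ < 1 := by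
    intro x hx
    have h1 : lo < x := lt_of_lt_of_le ha_lo hx.1
    have h2 : x < hi := lt_of_le_of_lt hx.2 hb_hi
    exact ⟨by linarith, by linarith, by linarith, by linarith⟩
  have hco : ContinuousOn (fun x : ℝ => x*(x+δ)/((1-x)*(1-x-δ))) (Icc a b) := by
    apply ContinuousOn.div (by fun_prop) (by fun_prop)
    intro x hx
    obtain ⟨h1, h2, h3, h4⟩ := hbnd x hx
    have : (0:ℝ) < (1-x)*(1-x-δ) := mul_pos (by linarith) (by linarith)
    exact ne_of_gt this
  -- f a ≤ θ
  obtain ⟨ha0, ha1, ha2, ha3⟩ := hbnd a ⟨le_refl a, hab⟩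
  obtain ⟨hb0, hb1, hb2, hb3⟩ := hbnd b ⟨hab, le_refl b⟩
  have hda : 0 < (1-a)*(1-a-δ) := mul_pos (by linarith) (by linarith)
  have hdb : 0 < (1-b)*(1-b-δ) := mul_pos (by linarith) (by linarith)
  have hfa : a*(a+δ)/((1-a)*(1-a-δ)) ≤ θ := by
    rw [div_le_iff₀ hda]
    have hden_a : c ≤ (1-a)*(1-a-δ) := by
      rw [hc_def]
      exact mul_le_mul (by linarith) (by linarith) (by linarith) (by linarith)
    have hnum_a : a*(a+δ) ≤ a - lo := by
      rcases le_or_gt 0 δ with h | h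
      · have hl : lo = 0 := max_eq_left (by linarith)
        have h2 : a*(a+δ) ≤ a*1 := mul_le_mul_of_nonneg_left (by linarith) (le_of_lt ha0)
        rw [hl]; linarith
      · have hl : lo = -δ := max_eq_right (by linarith)
        have h2 : a*(a+δ) ≤ 1*(a+δ) := mul_le_mul_of_nonneg_right (by linarith) (le_of_lt ha2)
        rw [hl]; linarith
    have h1 : a - lo ≤ θ*c := by
      have := min_le_right ((hi-lo)/2) (θ*c)
      simp only [ha_def]; linarith
    calc a*(a+δ) ≤ a - lo := hnum_a
      _ ≤ θ*c := h1
      _ ≤ θ*((1-a)*(1-a-δ)) := mul_le_mul_of_nonneg_left hden_a (le_of_lt hθ)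
  have hfb : θ ≤ b*(b+δ)/((1-b)*(1-b-δ)) := by
    rw [le_div_iff₀ hdb]
    have hnum_b : n ≤ b*(b+δ) := by
      rw [hn_def]
      exact mul_le_mul hb_m (by linarith) (le_of_lt hmδ) (le_of_lt hb0)
    have hden_b : (1-b)*(1-b-δ) ≤ hi - b := by
      rcases le_or_gt 0 δ with h | h
      · have hl : hi = 1 - δ := min_eq_right (by linarith)
        have h2 : (1-b)*(1-b-δ) ≤ 1*(1-b-δ) := mul_le_mul_of_nonneg_right (by linarith) (by linarith)
        rw [hl]; linarith
      · have hl : hi = 1 := min_eq_left (by linarith)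
        have hbd : -δ ≤ b := by
          have : lo < b := lt_of_lt_of_le ha_lo hab
          linarith
        have h2 : (1-b)*(1-b-δ) ≤ (1-b)*1 := mul_le_mul_of_nonneg_left (by linarith) (by linarith)
        rw [hl]; linarith
    have h1 : hi - b ≤ n/θ := by
      have := min_le_right ((hi-lo)/2) (n/θ)
      simp only [hb_def]; linarith
    calc θ*((1-b)*(1-b-δ)) ≤ θ*(hi - b) := mul_le_mul_of_nonneg_left hden_b (le_of_lt hθ)
      _ ≤ θ*(n/θ) := mul_le_mul_of_nonneg_left h1 (le_of_lt hθ)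
      _ = n := by field_simp
      _ ≤ b*(b+δ) := hnum_b
  have hmem : θ ∈ Icc (a*(a+δ)/((1-a)*(1-a-δ))) (b*(b+δ)/((1-b)*(1-b-δ))) := ⟨hfa, hfb⟩
  obtain ⟨x, hx, hfx⟩ := intermediate_value_Icc hab hco hmem
  obtain ⟨h1, h2, h3, h4⟩ := hbnd x hx
  exact ⟨x, h1, h2, h3, h4, hfx⟩

lemma rdop_inj {δ a b : ℝ} (ha0 : 0 < a) (ha3 : a < 1) (ha2 : 0 < a+δ) (ha1 : a+δ < 1)
    (hb0 : 0 < b) (hb3 : b < 1) (hb2 : 0 < b+δ) (hb1 : b+δ < 1)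
    (heq : a*(a+δ)/((1-a)*(1-a-δ)) = b*(b+δ)/((1-b)*(1-b-δ))) : a = b := by
  rcases lt_trichotomy a b with h | h | h
  · exact absurd heq (ne_of_lt (rdop_mono ha0 ha2 hb3 hb1 h))
  · exact h
  · exact absurd heq.symm (ne_of_lt (rdop_mono hb0 hb2 ha3 ha1 h))

/-- the map `(p0, p1) ↦ (p1 − p0, (p0 p1)/((1 − p0)(1 − p1)))` is a
bijection from `(0,1) × (0,1)` onto `(−1,1) × (0,∞)`: for every `δ ∈ (−1,1)` and
`θ ∈ (0,∞)` there is a unique `(p0, p1) ∈ (0,1)²` with `p1 − p0 = δ` and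
`(p0 p1)/((1 − p0)(1 − p1)) = θ`. -/
theorem riskDiff_oddsProduct_bijective :
    Set.BijOn (fun p : ℝ × ℝ => (p.2 - p.1, (p.1 * p.2) / ((1 - p.1) * (1 - p.2))))
      (Set.Ioo (0 : ℝ) 1 ×ˢ Set.Ioo (0 : ℝ) 1)
      (Set.Ioo (-1 : ℝ) 1 ×ˢ Set.Ioi (0 : ℝ))
    ∧ ∀ δ ∈ Set.Ioo (-1 : ℝ) 1, ∀ θ ∈ Set.Ioi (0 : ℝ),
        ∃! p : ℝ × ℝ, p.1 ∈ Set.Ioo (0 : ℝ) 1 ∧ p.2 ∈ Set.Ioo (0 : ℝ) 1 ∧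
          p.2 - p.1 = δ ∧ (p.1 * p.2) / ((1 - p.1) * (1 - p.2)) = θ := by
  have keyinj : ∀ p0 p1 q0 q1 : ℝ, p0 ∈ Ioo (0:ℝ) 1 → p1 ∈ Ioo (0:ℝ) 1 →
      q0 ∈ Ioo (0:ℝ) 1 → q1 ∈ Ioo (0:ℝ) 1 → p1 - p0 = q1 - q0 →
      (p0*p1)/((1-p0)*(1-p1)) = (q0*q1)/((1-q0)*(1-q1)) → p0 = q0 ∧ p1 = q1 := by
    intro p0 p1 q0 q1 hp0 hp1 hq0 hq1 hd ht
    set δ : ℝ := p1 - p0 with hδdef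
    have hp1' : p1 = p0 + δ := by rw [hδdef]; ring
    have hq1' : q1 = q0 + δ := by rw [hd]; ring
    have heq : p0*(p0+δ)/((1-p0)*(1-p0-δ)) = q0*(q0+δ)/((1-q0)*(1-q0-δ)) := by
      have e1 : 1 - p0 - δ = 1 - p1 := by rw [hp1']; ring
      have e2 : 1 - q0 - δ = 1 - q1 := by rw [hq1']; ring
      rw [e1, e2, ← hp1', ← hq1']; exact ht
    have h00 : p0 = q0 := rdop_inj hp0.1 hp0.2 (by rw [← hp1']; exact hp1.1)
      (by rw [← hp1']; exact hp1.2) hq0.1 hq0.2 (by rw [← hq1']; exact hq1.1)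
      (by rw [← hq1']; exact hq1.2) heq
    exact ⟨h00, by rw [hp1', hq1', h00]⟩
  constructor
  · refine ⟨?_, ?_, ?_⟩
    · rintro ⟨p0, p1⟩ ⟨⟨h00, h01⟩, ⟨h10, h11⟩⟩
      refine ⟨⟨by dsimp; linarith, by dsimp; linarith⟩, ?_⟩
      exact div_pos (mul_pos h00 h10) (mul_pos (by linarith) (by linarith))
    · rintro ⟨p0, p1⟩ ⟨hp0, hp1⟩ ⟨q0, q1⟩ ⟨hq0, hq1⟩ heq
      simp only [Prod.mk.injEq] at heq
      obtain ⟨h1, h2⟩ := keyinj p0 p1 q0 q1 hp0 hp1 hq0 hq1 heq.1 heq.2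
      simp [h1, h2]
    · rintro ⟨δ, θ⟩ ⟨⟨hδ1, hδ2⟩, hθ⟩
      obtain ⟨x, h1, h2, h3, h4, h5⟩ := rdop_exists' hδ1 hδ2 (by exact hθ)
      refine ⟨(x, x+δ), ⟨⟨h1, h2⟩, ⟨h3, h4⟩⟩, ?_⟩
      have e1 : (1:ℝ) - x - δ = 1 - (x+δ) := by ring
      rw [e1] at h5
      simp [h5]
  · intro δ hδ θ hθ
    obtain ⟨x, h1, h2, h3, h4, h5⟩ := rdop_exists' hδ.1 hδ.2 hθ
    refine ⟨(x, x+δ), ⟨⟨h1, h2⟩, ⟨h3, h4⟩, by ring, ?_⟩, ?_⟩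
    · have e1 : (1:ℝ) - x - δ = 1 - (x+δ) := by ring
      rw [e1] at h5; exact h5
    · rintro ⟨q0, q1⟩ ⟨hq0, hq1, hqd, hqt⟩
      have h5' : x*(x+δ)/((1-x)*(1-(x+δ))) = θ := by
        have e1 : (1:ℝ) - x - δ = 1 - (x+δ) := by ring
        rw [e1] at h5; exact h5
      obtain ⟨e0, e1⟩ := keyinj q0 q1 x (x+δ) hq0 hq1 ⟨h1, h2⟩ ⟨h3, h4⟩
        (by dsimp at hqd ⊢; linarith) (by dsimp at hqt; rw [hqt, h5'])
      simp [e0, e1]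
end

section
/- Let δ ∈ (−1,1) and θ ∈ (0,∞) with θ ≠ 1, and set S = (θ(δ − 2) − δ)² + 4θ(1 − δ)(1 − θ) and p0 = ( θ(2 − δ) + δ − √S ) / ( 2(θ − 1) ). Then S ≥ 0, 0 < p0 < 1, 0 < p0 + δ < 1, and ( p0 · (p0 + δ) ) / ( (1 − p0)(1 − p0 − δ) ) = θ; that is, (p0, p0 + δ) is the inverse of the (risk difference, odds product) parameterization, given in closed form. -/
set_option maxHeartbeats 1000000


/-- closed-form inverse of the (risk difference, odds product)
parameterization. For `δ ∈ (−1,1)`, `θ ∈ (0,∞)`, `θ ≠ 1`, with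
`S = (θ(δ−2) − δ)² + 4θ(1−δ)(1−θ)` and `p0 = (θ(2−δ) + δ − √S)/(2(θ−1))`, we have
`S ≥ 0`, `0 < p0 < 1`, `0 < p0 + δ < 1`, and
`(p0 (p0+δ))/((1−p0)(1−p0−δ)) = θ`. -/
theorem riskDiff_oddsProduct_closed_form_inverse
    (δ θ : ℝ) (hδ : δ ∈ Set.Ioo (-1 : ℝ) 1) (hθ : θ ∈ Set.Ioi (0 : ℝ)) (hθ1 : θ ≠ 1)
    (S p0 : ℝ)
    (hS : S = (θ * (δ - 2) - δ) ^ 2 + 4 * θ * (1 - δ) * (1 - θ))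
    (hp0 : p0 = (θ * (2 - δ) + δ - Real.sqrt S) / (2 * (θ - 1))) :
    0 ≤ S ∧ 0 < p0 ∧ p0 < 1 ∧ 0 < p0 + δ ∧ p0 + δ < 1 ∧
      (p0 * (p0 + δ)) / ((1 - p0) * (1 - p0 - δ)) = θ := by
  obtain ⟨hδ1, hδ2⟩ := hδ
  have hθ0 : (0:ℝ) < θ := hθ
  have hSval : S = δ^2 * (θ-1)^2 + 4*θ := by rw [hS]; ring
  have hSpos : 0 < S := by nlinarith [sq_nonneg (δ*(θ-1))]
  have hsnn : 0 ≤ Real.sqrt S := Real.sqrt_nonneg S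
  have hsq : Real.sqrt S ^ 2 = S := Real.sq_sqrt hSpos.le
  have hθm1 : θ - 1 ≠ 0 := sub_ne_zero.mpr hθ1
  have hp0' : 2*(θ-1)*p0 = θ*(2-δ)+δ - Real.sqrt S := by
    rw [hp0]; field_simp
  have h1δ : (0:ℝ) < 1 - δ := by linarith
  have h2δ : (0:ℝ) < 1 + δ := by linarith
  have hlb : ∀ B : ℝ, B^2 < S → B < Real.sqrt S := by
    intro B h; nlinarith [hsq, hsnn]
  have hub : ∀ B : ℝ, 0 ≤ B → S < B^2 → Real.sqrt S < B := by
    intro B hB h; nlinarith [hsq, hsnn]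
  have e1 : p0 - 1 = (2 + δ*(1-θ) - Real.sqrt S)/(2*(θ-1)) := by
    rw [hp0]; field_simp; ring
  have e2 : p0 + δ = (2*θ + δ*(θ-1) - Real.sqrt S)/(2*(θ-1)) := by
    rw [hp0]; field_simp; ring
  have e3 : p0 + δ - 1 = (2 + δ*(θ-1) - Real.sqrt S)/(2*(θ-1)) := by
    rw [hp0]; field_simp; ring
  -- the four inequalities
  have hmain : 0 < p0 ∧ p0 < 1 ∧ 0 < p0 + δ ∧ p0 + δ < 1 := by
    rcases hθ1.lt_or_gt with hlt | hgt
    · -- θ < 1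
      have h1θ : (0:ℝ) < 1 - θ := by linarith
      have hA : θ*(2-δ)+δ < Real.sqrt S := by
        apply hlb; nlinarith [mul_pos (mul_pos hθ0 h1θ) h1δ]
      have hB : Real.sqrt S < 2 + δ*(1-θ) := by
        apply hub
        · nlinarith [mul_pos h1θ h2δ]
        · nlinarith [mul_pos h1θ h2δ]
      have hC : 2*θ + δ*(θ-1) < Real.sqrt S := by
        apply hlb; nlinarith [mul_pos (mul_pos hθ0 h1θ) h2δ]
      have hD : Real.sqrt S < 2 + δ*(θ-1) := by
        apply hub
        · nlinarith [mul_pos h1θ h1δ]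
        · nlinarith [mul_pos h1θ h1δ]
      refine ⟨?_, ?_, ?_, ?_⟩
      · rw [hp0]; exact div_pos_iff.mpr (Or.inr ⟨by linarith, by linarith⟩)
      · have : p0 - 1 < 0 := e1 ▸ div_neg_iff.mpr (Or.inl ⟨by linarith, by linarith⟩)
        linarith
      · have : 0 < p0 + δ := e2 ▸ div_pos_iff.mpr (Or.inr ⟨by linarith, by linarith⟩)
        linarith
      · have : p0 + δ - 1 < 0 := e3 ▸ div_neg_iff.mpr (Or.inl ⟨by linarith, by linarith⟩)
        linarith
    · -- 1 < θ
      have h1θ : (0:ℝ) < θ - 1 := by linarith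
      have hA : Real.sqrt S < θ*(2-δ)+δ := by
        apply hub
        · nlinarith [mul_pos h1θ h1δ]
        · nlinarith [mul_pos (mul_pos hθ0 h1θ) h1δ]
      have hB : 2 + δ*(1-θ) < Real.sqrt S := by
        apply hlb; nlinarith [mul_pos h1θ h2δ]
      have hC : Real.sqrt S < 2*θ + δ*(θ-1) := by
        apply hub
        · nlinarith [mul_pos h1θ h2δ]
        · nlinarith [mul_pos (mul_pos hθ0 h1θ) h2δ]
      have hD : 2 + δ*(θ-1) < Real.sqrt S := by
        apply hlb; nlinarith [mul_pos h1θ h1δ]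
      refine ⟨?_, ?_, ?_, ?_⟩
      · rw [hp0]; exact div_pos_iff.mpr (Or.inl ⟨by linarith, by linarith⟩)
      · have : p0 - 1 < 0 := e1 ▸ div_neg_iff.mpr (Or.inr ⟨by linarith, by linarith⟩)
        linarith
      · have : 0 < p0 + δ := e2 ▸ div_pos_iff.mpr (Or.inl ⟨by linarith, by linarith⟩)
        linarith
      · have : p0 + δ - 1 < 0 := e3 ▸ div_neg_iff.mpr (Or.inr ⟨by linarith, by linarith⟩)
        linarith
  obtain ⟨h0, h1, h2, h3⟩ := hmain
  refine ⟨hSpos.le, h0, h1, h2, h3, ?_⟩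
  -- quadratic satisfied by p0
  have hsqrt_eq : Real.sqrt S = θ*(2-δ)+δ - 2*(θ-1)*p0 := by linarith
  have key : (θ*(2-δ)+δ - 2*(θ-1)*p0)^2 = (θ * (δ - 2) - δ) ^ 2 + 4 * θ * (1 - δ) * (1 - θ) := by
    rw [← hsqrt_eq, hsq, hS]
  have hquad : (θ-1) * ((θ-1)*p0^2 - (θ*(2-δ)+δ)*p0 + θ*(1-δ)) = 0 := by
    linear_combination key / 4
  have hquad' : (θ-1)*p0^2 - (θ*(2-δ)+δ)*p0 + θ*(1-δ) = 0 :=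
    (mul_eq_zero.mp hquad).resolve_left hθm1
  have hne1 : (1 - p0) ≠ 0 := by linarith
  have hne2 : (1 - p0 - δ) ≠ 0 := by intro h; nlinarith
  field_simp
  linear_combination -hquad'
end

section
/- (Double robustness of the g-estimating equation for δ.) Suppose δ^D(x) ≠ 0 for every x ∈ 𝒳. (i) For every function w : {0,1} × 𝒳 → ℝ and every x ∈ 𝒳, E[ ( Y − D·δ(X) − p_0^Y(X) + p_0^D(X)·δ(X) ) · w(Z, X) | X = x ] = 0, where δ, p_0^Y, p_0^D are the true nuisance functions. (ii) For all functions pY*, pD* : 𝒳 → ℝ and every x ∈ 𝒳, E[ ( Y − D·δ(X) − pY*(X) + pD*(X)·δ(X) ) · (2Z − 1)/f(Z | X) | X = x ] = 0, where f is the true conditional instrument density and δ the true conditional Wald estimand. -/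
/-!
On the stratum `X = x`, split by the instrument: an integrand `(Y - D c - k) r(Z)` integrates to
`∑_z (p_z^Y(x) - p_z^D(x) c - k) r(z) μ(Z = z, X = x)`. For `c = δ(x)` the Wald ratio makes
`p_z^Y(x) - p_z^D(x) δ(x)` independent of `z`, so the sum is this common value minus `k`, times
`∑_z r(z) μ(Z = z, X = x)`. In (i) the true nuisances make the first factor vanish; in (ii) the
weights `r(z) = (2z - 1) / f(z | x)` make the second one `μ(X = x) - μ(X = x) = 0`.
-/

open MeasureTheory

section StrataIntegrals

variable {Ω : Type*} [MeasurableSpace Ω] {μ : Measure Ω}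

lemma setIntegral_eq_add_of_binary {Z F : Ω → ℝ} (hZ : Measurable Z)
    (hZ01 : ∀ ω, Z ω = 0 ∨ Z ω = 1) {B : Set Ω} (hB : MeasurableSet B)
    (h0 : IntegrableOn F ({ω | Z ω = 0} ∩ B) μ) (h1 : IntegrableOn F ({ω | Z ω = 1} ∩ B) μ) :
    ∫ ω in B, F ω ∂μ
      = ∫ ω in {ω | Z ω = 0} ∩ B, F ω ∂μ + ∫ ω in {ω | Z ω = 1} ∩ B, F ω ∂μ := by
  have hsplit : ({ω | Z ω = 0} ∩ B) ∪ ({ω | Z ω = 1} ∩ B) = B := by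
    ext ω; rcases hZ01 ω with h | h <;> simp [h]
  have hdisj : Disjoint ({ω | Z ω = 0} ∩ B) ({ω | Z ω = 1} ∩ B) :=
    Set.disjoint_left.2 fun ω h0 h1 => by simp_all
  rw [← setIntegral_union hdisj ((hZ (measurableSet_singleton 1)).inter hB) h0 h1, hsplit]

variable [IsFiniteMeasure μ]

lemma condMean_mul_measureReal (W : Ω → ℝ) {A : Set Ω} (hA : μ A ≠ 0) :
    condMean μ W A * μ.real A = ∫ ω in A, W ω ∂μ := by
  rw [condMean, measureReal_def, div_mul_cancel₀]
  exact ENNReal.toReal_ne_zero.2 ⟨hA, measure_ne_top μ A⟩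

lemma setIntegral_sub_mul_sub_mul_const {Y D : Ω → ℝ} (hY : Integrable Y μ)
    (hD : Integrable D μ) {A : Set Ω} (hA : μ A ≠ 0) (c k r : ℝ) :
    ∫ ω in A, (Y ω - D ω * c - k) * r ∂μ
      = (condMean μ Y A - condMean μ D A * c - k) * r * μ.real A := by
  rw [integral_mul_const, integral_sub (f := fun ω => Y ω - D ω * c) (g := fun _ => k)
      (hY.sub (hD.mul_const c)).integrableOn (integrable_const k).integrableOn,
    integral_sub (g := fun ω => D ω * c) hY.integrableOn (hD.mul_const c).integrableOn,
    integral_mul_const, setIntegral_const, smul_eq_mul, ← condMean_mul_measureReal Y hA,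
    ← condMean_mul_measureReal D hA]
  ring

lemma setIntegral_eq_add_condMean_of_binary {Z Y D F : Ω → ℝ} (hZ : Measurable Z)
    (hZ01 : ∀ ω, Z ω = 0 ∨ Z ω = 1) (hY : Integrable Y μ) (hD : Integrable D μ)
    {B : Set Ω} (hB : MeasurableSet B) (h0 : μ ({ω | Z ω = 0} ∩ B) ≠ 0)
    (h1 : μ ({ω | Z ω = 1} ∩ B) ≠ 0) (c k : ℝ) (r : ℝ → ℝ)
    (hF : ∀ ω ∈ B, F ω = (Y ω - D ω * c - k) * r (Z ω)) :
    ∫ ω in B, F ω ∂μ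
      = (condMean μ Y ({ω | Z ω = 0} ∩ B) - condMean μ D ({ω | Z ω = 0} ∩ B) * c - k) * r 0
          * μ.real ({ω | Z ω = 0} ∩ B)
        + (condMean μ Y ({ω | Z ω = 1} ∩ B) - condMean μ D ({ω | Z ω = 1} ∩ B) * c - k) * r 1
          * μ.real ({ω | Z ω = 1} ∩ B) := by
  have hmeas : ∀ z, MeasurableSet ({ω | Z ω = z} ∩ B) := fun z =>
    (hZ (measurableSet_singleton z)).inter hB
  have hFeq : ∀ z, Set.EqOn F (fun ω => (Y ω - D ω * c - k) * r z) ({ω | Z ω = z} ∩ B) :=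
    fun z ω ⟨hz, hω⟩ => by rw [hF ω hω, show Z ω = z from hz]
  have hFint : ∀ z, IntegrableOn F ({ω | Z ω = z} ∩ B) μ := fun z =>
    (((hY.sub (hD.mul_const c)).sub (integrable_const k)).mul_const (r z)).integrableOn.congr_fun
      (hFeq z).symm (hmeas z)
  rw [setIntegral_eq_add_of_binary hZ hZ01 hB (hFint 0) (hFint 1),
    setIntegral_congr_fun (hmeas 0) (hFeq 0), setIntegral_congr_fun (hmeas 1) (hFeq 1),
    setIntegral_sub_mul_sub_mul_const hY hD h0, setIntegral_sub_mul_sub_mul_const hY hD h1]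

end StrataIntegrals

theorem g_equation_delta_doubly_robust_general
    {Ω : Type*} [MeasurableSpace Ω] (μ : Measure Ω) [IsProbabilityMeasure μ]
    {𝒳 : Type*} [MeasurableSpace 𝒳] [MeasurableSingletonClass 𝒳]
    (Z D Y : Ω → ℝ) (X : Ω → 𝒳)
    (hZmeas : Measurable Z) (hDmeas : Measurable D) (hXmeas : Measurable X)
    (hZ01 : ∀ ω, Z ω = 0 ∨ Z ω = 1) (hD01 : ∀ ω, D ω = 0 ∨ D ω = 1)
    (hYint : Integrable Y μ)
    -- positivity
    (hPos : ∀ (z : ℝ), (z = 0 ∨ z = 1) → ∀ (x : 𝒳),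
      0 < μ ({ω | Z ω = z} ∩ {ω | X ω = x}))
    -- f(z | x) = μ(Z = z | X = x)
    (f : ℝ → 𝒳 → ℝ)
    (hf : ∀ (z : ℝ) (x : 𝒳),
      f z x = (μ ({ω | Z ω = z} ∩ {ω | X ω = x})).toReal / (μ {ω | X ω = x}).toReal)
    -- p_z^Y, p_z^D, δ^Y, δ^D, and the conditional Wald estimand δ
    (pY pD : ℝ → 𝒳 → ℝ)
    (hpY : ∀ (z : ℝ) (x : 𝒳),
      pY z x = condMean μ Y ({ω | Z ω = z} ∩ {ω | X ω = x}))
    (hpD : ∀ (z : ℝ) (x : 𝒳),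
      pD z x = condMean μ D ({ω | Z ω = z} ∩ {ω | X ω = x}))
    (δY δD δ : 𝒳 → ℝ)
    (hδY : ∀ x, δY x = pY 1 x - pY 0 x)
    (hδD : ∀ x, δD x = pD 1 x - pD 0 x)
    (hδDne : ∀ x, δD x ≠ 0)
    (hδ : ∀ x, δ x = δY x / δD x) :
    (∀ (w : ℝ → 𝒳 → ℝ) (x : 𝒳),
      condMean μ
          (fun ω => (Y ω - D ω * δ (X ω) - pY 0 (X ω) + pD 0 (X ω) * δ (X ω))
            * w (Z ω) (X ω))
          {ω | X ω = x} = 0)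
    ∧ (∀ (pYs pDs : 𝒳 → ℝ) (x : 𝒳),
      condMean μ
          (fun ω => (Y ω - D ω * δ (X ω) - pYs (X ω) + pDs (X ω) * δ (X ω))
            * (2 * Z ω - 1) / f (Z ω) (X ω))
          {ω | X ω = x} = 0) := by
  have hDint : Integrable D μ := Integrable.of_bound hDmeas.aestronglyMeasurable 1
    (ae_of_all _ fun ω => by rcases hD01 ω with h | h <;> simp [h])
  have hWald : ∀ x, pY 1 x - pD 1 x * δ x = pY 0 x - pD 0 x * δ x := fun x => by
    have hne : pD 1 x - pD 0 x ≠ 0 := hδD x ▸ hδDne x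
    rw [hδ, hδY, hδD]
    field_simp
    ring
  have hstrata : ∀ x c k (r : ℝ → ℝ) (F : Ω → ℝ),
      (∀ ω ∈ {ω | X ω = x}, F ω = (Y ω - D ω * c - k) * r (Z ω)) →
      ∫ ω in {ω | X ω = x}, F ω ∂μ
        = (pY 0 x - pD 0 x * c - k) * r 0 * μ.real ({ω | Z ω = 0} ∩ {ω | X ω = x})
          + (pY 1 x - pD 1 x * c - k) * r 1 * μ.real ({ω | Z ω = 1} ∩ {ω | X ω = x}) :=
    fun x c k r F hF => by
      rw [hpY, hpY, hpD, hpD]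
      exact setIntegral_eq_add_condMean_of_binary hZmeas hZ01 hYint hDint
        (hXmeas (measurableSet_singleton x)) (hPos 0 (.inl rfl) x).ne' (hPos 1 (.inr rfl) x).ne'
        c k r hF
  refine ⟨fun w x => ?_, fun pYs pDs x => ?_⟩
  · rw [condMean, hstrata x (δ x) (pY 0 x - pD 0 x * δ x) (fun z => w z x) _
      fun ω (hω : X ω = x) => by rw [hω]; ring, hWald]
    simp
  · rw [condMean, hstrata x (δ x) (pYs x - pDs x * δ x) (fun z => (2 * z - 1) / f z x) _
      fun ω (hω : X ω = x) => by rw [hω]; ring, hWald, hf, hf]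
    have hm0 := (measureReal_ne_zero_iff).2 (hPos 0 (.inl rfl) x).ne'
    have hm1 := (measureReal_ne_zero_iff).2 (hPos 1 (.inr rfl) x).ne'
    simp only [← measureReal_def]
    field_simp
    ring

/-- double robustness of the g-estimating equation for `δ`:
assuming `δ^D(x) ≠ 0` for every `x`,
(i) for every `w : {0,1} × 𝒳 → ℝ` and every `x`,
`E[ (Y − D δ(X) − p_0^Y(X) + p_0^D(X) δ(X)) w(Z,X) | X = x ] = 0` with the true
nuisances; (ii) for all `pY*, pD* : 𝒳 → ℝ` and every `x`,
`E[ (Y − D δ(X) − pY*(X) + pD*(X) δ(X)) (2Z−1)/f(Z|X) | X = x ] = 0` with the true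
`f` and the true conditional Wald estimand `δ`. -/
theorem g_equation_delta_doubly_robust
    {Ω : Type*} [MeasurableSpace Ω] (μ : Measure Ω) [IsProbabilityMeasure μ]
    {𝒳 : Type*} [Fintype 𝒳] [MeasurableSpace 𝒳] [MeasurableSingletonClass 𝒳]
    (Z D Y : Ω → ℝ) (X : Ω → 𝒳)
    (hZmeas : Measurable Z) (hDmeas : Measurable D) (hXmeas : Measurable X)
    (hZ01 : ∀ ω, Z ω = 0 ∨ Z ω = 1) (hD01 : ∀ ω, D ω = 0 ∨ D ω = 1)
    (hYint : Integrable Y μ)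
    -- positivity
    (hPos : ∀ (z : ℝ), (z = 0 ∨ z = 1) → ∀ (x : 𝒳),
      0 < μ ({ω | Z ω = z} ∩ {ω | X ω = x}))
    -- f(z | x) = μ(Z = z | X = x)
    (f : ℝ → 𝒳 → ℝ)
    (hf : ∀ (z : ℝ) (x : 𝒳),
      f z x = (μ ({ω | Z ω = z} ∩ {ω | X ω = x})).toReal / (μ {ω | X ω = x}).toReal)
    -- p_z^Y, p_z^D, δ^Y, δ^D, and the conditional Wald estimand δ
    (pY pD : ℝ → 𝒳 → ℝ)
    (hpY : ∀ (z : ℝ) (x : 𝒳),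
      pY z x = condMean μ Y ({ω | Z ω = z} ∩ {ω | X ω = x}))
    (hpD : ∀ (z : ℝ) (x : 𝒳),
      pD z x = condMean μ D ({ω | Z ω = z} ∩ {ω | X ω = x}))
    (δY δD δ : 𝒳 → ℝ)
    (hδY : ∀ x, δY x = pY 1 x - pY 0 x)
    (hδD : ∀ x, δD x = pD 1 x - pD 0 x)
    (hδDne : ∀ x, δD x ≠ 0)
    (hδ : ∀ x, δ x = δY x / δD x) :
    (∀ (w : ℝ → 𝒳 → ℝ) (x : 𝒳),
      condMean μ
          (fun ω => (Y ω - D ω * δ (X ω) - pY 0 (X ω) + pD 0 (X ω) * δ (X ω))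
            * w (Z ω) (X ω))
          {ω | X ω = x} = 0)
    ∧ (∀ (pYs pDs : 𝒳 → ℝ) (x : 𝒳),
      condMean μ
          (fun ω => (Y ω - D ω * δ (X ω) - pYs (X ω) + pDs (X ω) * δ (X ω))
            * (2 * Z ω - 1) / f (Z ω) (X ω))
          {ω | X ω = x} = 0) :=
  g_equation_delta_doubly_robust_general μ Z D Y X hZmeas hDmeas hXmeas hZ01 hD01 hYint hPos f hf pY
    pD hpY hpD δY δD δ hδY hδD hδDne hδ
end
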